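/- arXiv:2510.23563 — 8 statements merged into one kernel-verified Lean document; each statement's English description precedes it below -/
import Mathlib

section
/- Let B_2(x) = x^2 - x + 1/6 be the second Bernoulli polynomial. If f : [0,1] → ℝ is convex, then ∫₀¹ B_2(x) f(x) dx ≥ 0. -/
/-!
Let `a < b` be the two roots of `B₂`, so that `B₂(x) = (x - a)(x - b)`, and let `L` be the secant
line of `f` through `a` and `b`. By convexity `f - L` is `≥ 0` outside `(a, b)` and `≤ 0` inside,
exactly the sign pattern of `B₂`, so `B₂ (f - L) ≥ 0` on `[0, 1]`. Since `B₂` is orthogonal to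
affine functions on `[0, 1]`, `∫ B₂ f = ∫ B₂ (f - L) ≥ 0`.
-/

open MeasureTheory Set

lemma integral_bernoulli2_mul_affine (a c d : ℝ) :
    ∫ x in (0 : ℝ)..1, (x ^ 2 - x + 1 / 6) * (c + d * (x - a)) = 0 := by
  have h : ∀ x : ℝ, (x ^ 2 - x + 1 / 6) * (c + d * (x - a))
      = d * x ^ 3 + (c - d * a - d) * x ^ 2 + (d / 6 - c + d * a) * x + (c - d * a) / 6 := by
    intro x; ring
  simp_rw [h]
  simp (disch := exact Continuous.intervalIntegrable (by fun_prop) _ _) only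
    [intervalIntegral.integral_add, intervalIntegral.integral_const_mul, integral_pow,
      intervalIntegral.integral_const]
  rw [intervalIntegral.integral_const_mul, integral_id]
  norm_num
  ring

lemma exists_bernoulli2_eq_mul :
    ∃ a ∈ Icc (0 : ℝ) 1, ∃ b ∈ Icc (0 : ℝ) 1,
      a ≠ b ∧ ∀ x : ℝ, x ^ 2 - x + 1 / 6 = (x - a) * (x - b) := by
  have h3 : √3 ^ 2 = 3 := Real.sq_sqrt (by norm_num)
  have h1 : 1 < √3 := by nlinarith [Real.sqrt_nonneg 3]
  have h2 : √3 < 2 := by nlinarith [Real.sqrt_nonneg 3]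
  exact ⟨(3 - √3) / 6, ⟨by linarith, by linarith⟩, (3 + √3) / 6, ⟨by linarith, by linarith⟩,
    fun h => by linarith, fun x => by linear_combination (1 / 36 : ℝ) * h3⟩

lemma ConvexOn.mul_sub_secant_nonneg {s : Set ℝ} {f : ℝ → ℝ} (hf : ConvexOn ℝ s f)
    {a b x : ℝ} (ha : a ∈ s) (hb : b ∈ s) (hx : x ∈ s) (hab : a ≠ b) :
    0 ≤ (x - a) * (x - b) * (f x - (f a + slope f a b * (x - a))) := by
  rcases eq_or_ne x a with rfl | hxa
  · simp
  have hmono := hf.slope_mono ha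
  have hslope : 0 ≤ (x - b) * (slope f a x - slope f a b) := by
    rcases le_total x b with hxb | hbx
    · exact mul_nonneg_of_nonpos_of_nonpos (by linarith)
        (by linarith [hmono ⟨hx, hxa⟩ ⟨hb, hab.symm⟩ hxb])
    · exact mul_nonneg (by linarith) (by linarith [hmono ⟨hb, hab.symm⟩ ⟨hx, hxa⟩ hbx])
  have hsecant : f x - (f a + slope f a b * (x - a)) = (x - a) * (slope f a x - slope f a b) := by
    rw [slope_def_field, slope_def_field]
    field_simp [sub_ne_zero.2 hxa]
    ring
  calc 0 ≤ (x - a) ^ 2 * ((x - b) * (slope f a x - slope f a b)) := by positivity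
    _ = _ := by rw [hsecant]; ring

lemma ConvexOn.two_mul_map_midpoint_sub_max_le {f : ℝ → ℝ} {a b x : ℝ}
    (hf : ConvexOn ℝ (Icc a b) f) (hx : x ∈ Icc a b) :
    2 * f ((a + b) / 2) - max (f a) (f b) ≤ f x := by
  have hab : a ≤ b := hx.1.trans hx.2
  have hx' : a + b - x ∈ Icc a b := ⟨by linarith [hx.2], by linarith [hx.1]⟩
  have hmid : f ((a + b) / 2) ≤ 1 / 2 * f x + 1 / 2 * f (a + b - x) := by
    have := hf.2 hx hx' (by norm_num : (0 : ℝ) ≤ 1 / 2) (by norm_num : (0 : ℝ) ≤ 1 / 2) (by norm_num)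
    simpa only [smul_eq_mul, show (1 / 2 : ℝ) * x + 1 / 2 * (a + b - x) = (a + b) / 2 by ring]
      using this
  have := hf.le_max_of_mem_Icc (left_mem_Icc.2 hab) (right_mem_Icc.2 hab) hx'
  linarith

lemma ConvexOn.intervalIntegrable {f : ℝ → ℝ} {a b : ℝ} (hab : a ≤ b)
    (hf : ConvexOn ℝ (Icc a b) f) : IntervalIntegrable f volume a b := by
  rw [intervalIntegrable_iff_integrableOn_Ioo_of_le hab]
  have hcont : ContinuousOn f (Ioo a b) := by
    simpa only [interior_Icc] using hf.continuousOn_interior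
  refine .of_bound measure_Ioo_lt_top (hcont.aestronglyMeasurable measurableSet_Ioo)
    (max |2 * f ((a + b) / 2) - max (f a) (f b)| |max (f a) (f b)|) ?_
  refine (ae_restrict_iff' measurableSet_Ioo).2 (.of_forall fun x hx => ?_)
  have hx' := Ioo_subset_Icc_self hx
  exact abs_le_max_abs_abs (hf.two_mul_map_midpoint_sub_max_le hx')
    (hf.le_max_of_mem_Icc (left_mem_Icc.2 hab) (right_mem_Icc.2 hab) hx')

/-- If `f` is convex on `[0,1]`, then `∫₀¹ B₂(x) f(x) dx ≥ 0`, where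
`B₂(x) = x² - x + 1/6` is the second Bernoulli polynomial. -/
theorem bernoulli2_convex_integral_nonneg (f : ℝ → ℝ)
    (hf : ConvexOn ℝ (Set.Icc (0 : ℝ) 1) f) :
    0 ≤ ∫ x in (0 : ℝ)..1, (x ^ 2 - x + 1 / 6) * f x := by
  obtain ⟨a, ha, b, hb, hab, hB⟩ := exists_bernoulli2_eq_mul
  set L : ℝ → ℝ := fun x => f a + slope f a b * (x - a)
  have hLf : ∀ x ∈ Icc (0 : ℝ) 1, (x ^ 2 - x + 1 / 6) * L x ≤ (x ^ 2 - x + 1 / 6) * f x := by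
    intro x hx
    rw [hB, ← sub_nonneg, ← mul_sub]
    exact hf.mul_sub_secant_nonneg ha hb hx hab
  have hB_cont : Continuous fun x : ℝ => x ^ 2 - x + 1 / 6 := by fun_prop
  calc (0 : ℝ) = ∫ x in (0 : ℝ)..1, (x ^ 2 - x + 1 / 6) * L x :=
        (integral_bernoulli2_mul_affine a (f a) (slope f a b)).symm
    _ ≤ _ := intervalIntegral.integral_mono_on zero_le_one
        (Continuous.intervalIntegrable (by fun_prop) _ _)
        ((hf.intervalIntegrable zero_le_one).continuousOn_mul hB_cont.continuousOn) hLf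
end

section
/- For 0 < α < 1, n ∈ ℕ with n ≥ 1, and t ∈ (0,1] with nt ∉ ℕ, define f_n(t) = ∫₀ᵗ (t-s)^{α-1} (⌈ns⌉ - ns - 1/2) ds. Then f_n(t) = (1/α) Σ_{k=1}^{⌊nt⌋} (t - k/n)^α + (1/(2α)) t^α - (n/(α(α+1))) t^{α+1}. -/
/-!
For `0 ≤ s ≤ t`, `⌈n s⌉` counts the `k ∈ {0, …, ⌊n t⌋}` with `k / n < s`, so the ceiling part
of the integral is a sum of integrals of the kernel `(t - s) ^ (α - 1)` over `(k / n, t]`, the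
`k`-th being `(t - k / n) ^ α / α`. The rest is elementary once `s (t - s) ^ (α - 1)` is written
as `t (t - s) ^ (α - 1) - (t - s) ^ α`.
-/

open MeasureTheory Finset

theorem Nat.ceil_eq_card_filter_lt {R : Type*} [Semiring R] [LinearOrder R]
    [IsStrictOrderedRing R] [FloorSemiring R] {x : R} {N : ℕ} (hx : x ≤ N) :
    ⌈x⌉₊ = #{k ∈ range N | ((k : ℕ) : R) < x} := by
  have : {k ∈ range N | ((k : ℕ) : R) < x} = range ⌈x⌉₊ := by
    ext k
    simp only [mem_filter, mem_range, ← Nat.lt_ceil]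
    exact ⟨And.right, fun hk => ⟨hk.trans_le (Nat.ceil_le.2 hx), hk⟩⟩
  rw [this, card_range]

theorem IntervalIntegrable.indicator {E : Type*} [NormedAddCommGroup E] {f : ℝ → E}
    {μ : Measure ℝ} {a b : ℝ} (hf : IntervalIntegrable f μ a b) {s : Set ℝ}
    (hs : MeasurableSet s) : IntervalIntegrable (s.indicator f) μ a b :=
  ⟨hf.1.indicator hs, hf.2.indicator hs⟩

theorem intervalIntegral.integral_indicator_Ioi {E : Type*} [NormedAddCommGroup E]
    [NormedSpace ℝ E] {f : ℝ → E} {a b c : ℝ} (hac : a ≤ c) (hcb : c ≤ b) :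
    ∫ s in a..b, (Set.Ioi c).indicator f s = ∫ s in c..b, f s := by
  rw [intervalIntegral.integral_of_le (hac.trans hcb), intervalIntegral.integral_of_le hcb,
    setIntegral_indicator measurableSet_Ioi, Set.Ioc_inter_Ioi, max_eq_right hac]

section NatCeil

variable {g : ℝ → ℝ} {n t : ℝ}

theorem mul_natCeil_mul_eqOn_sum_indicator (hn : 0 < n) (ht : 0 ≤ t) :
    Set.EqOn (fun s => g s * ⌈n * s⌉₊)
      (fun s => ∑ k ∈ range (⌊n * t⌋₊ + 1), (Set.Ioi (k / n : ℝ)).indicator g s)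
      (Set.uIcc 0 t) := by
  intro s hs
  rw [Set.uIcc_of_le ht] at hs
  have hns : n * s ≤ (⌊n * t⌋₊ + 1 : ℕ) := by
    push_cast
    exact (mul_le_mul_of_nonneg_left hs.2 hn.le).trans (Nat.lt_floor_add_one _).le
  dsimp only
  rw [Nat.ceil_eq_card_filter_lt hns, card_eq_sum_ones, Nat.cast_sum, mul_sum, sum_filter]
  refine sum_congr rfl fun k _ => ?_
  simp only [Set.indicator, Set.mem_Ioi, div_lt_iff₀' hn]
  split_ifs <;> simp

theorem intervalIntegrable_mul_natCeil_mul (hn : 0 < n) (ht : 0 ≤ t)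
    (hg : IntervalIntegrable g volume 0 t) :
    IntervalIntegrable (fun s => g s * ⌈n * s⌉₊) volume 0 t := by
  have hsum := IntervalIntegrable.sum (range (⌊n * t⌋₊ + 1)) fun k _ =>
    hg.indicator (measurableSet_Ioi (a := k / n))
  rw [Finset.sum_fn] at hsum
  exact hsum.congr ((mul_natCeil_mul_eqOn_sum_indicator hn ht).symm.mono Set.uIoc_subset_uIcc)

theorem integral_mul_natCeil_mul (hn : 0 < n) (ht : 0 ≤ t)
    (hg : IntervalIntegrable g volume 0 t) :
    ∫ s in (0 : ℝ)..t, g s * ⌈n * s⌉₊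
      = ∑ k ∈ range (⌊n * t⌋₊ + 1), ∫ s in (k / n : ℝ)..t, g s := by
  rw [intervalIntegral.integral_congr (mul_natCeil_mul_eqOn_sum_indicator hn ht),
    intervalIntegral.integral_finsetSum fun k _ => hg.indicator measurableSet_Ioi]
  refine sum_congr rfl fun k hk => intervalIntegral.integral_indicator_Ioi (by positivity) ?_
  rw [div_le_iff₀' hn]
  exact (Nat.cast_le.2 (Nat.lt_succ_iff.1 (mem_range.1 hk))).trans (Nat.floor_le (by positivity))

end NatCeil

section RiemannLiouvilleKernel

variable {α : ℝ}

theorem integral_sub_rpow_sub_one (hα : 0 < α) (c t : ℝ) :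
    ∫ s in c..t, (t - s) ^ (α - 1) = (t - c) ^ α / α := by
  rw [intervalIntegral.integral_comp_sub_left (fun u => u ^ (α - 1)),
    integral_rpow (Or.inl (by linarith)), sub_add_cancel, sub_self, Real.zero_rpow hα.ne',
    sub_zero]

theorem intervalIntegrable_sub_rpow_sub_one (hα : 0 < α) (a b t : ℝ) :
    IntervalIntegrable (fun s => (t - s) ^ (α - 1)) volume a b := by
  simpa using (intervalIntegral.intervalIntegrable_rpow' (r := α - 1) (by linarith)
    (a := t - a) (b := t - b)).comp_sub_left t

end RiemannLiouvilleKernel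

theorem fn_explicit_formula_general (α : ℝ) (hα : α ∈ Set.Ioo (0 : ℝ) 1)
    (n : ℕ) (hn : 1 ≤ n) (t : ℝ) (ht : t ∈ Set.Ioc (0 : ℝ) 1) :
    ∫ s in (0 : ℝ)..t, (t - s) ^ (α - 1) * ((⌈(n : ℝ) * s⌉ : ℝ) - n * s - 1 / 2)
      = (1 / α) * ∑ k ∈ Finset.Icc 1 ⌊(n : ℝ) * t⌋₊, (t - (k : ℝ) / n) ^ α
        + (1 / (2 * α)) * t ^ α - ((n : ℝ) / (α * (α + 1))) * t ^ (α + 1) := by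
  obtain ⟨hα, -⟩ := hα
  have hn : (0 : ℝ) < n := by exact_mod_cast hn
  have ht : 0 ≤ t := ht.1.le
  have hα' : 0 < α + 1 := by linarith
  have hsplit : ∀ s ∈ Set.uIcc 0 t,
      (t - s) ^ (α - 1) * ((⌈(n : ℝ) * s⌉ : ℝ) - n * s - 1 / 2)
        = (t - s) ^ (α - 1) * ⌈(n : ℝ) * s⌉₊
          + (n * (t - s) ^ (α + 1 - 1) - (n * t + 1 / 2) * (t - s) ^ (α - 1)) := by
    intro s hs
    rw [Set.uIcc_of_le ht] at hs
    rw [natCast_ceil_eq_intCast_ceil (by nlinarith [hs.1]), add_sub_cancel_right,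
      ← sub_add_cancel α 1, Real.rpow_add_one' (by linarith [hs.2]) (by simpa using hα.ne'),
      sub_add_cancel]
    ring
  have hker := intervalIntegrable_sub_rpow_sub_one hα 0 t t
  have hker' := intervalIntegrable_sub_rpow_sub_one hα' 0 t t
  rw [intervalIntegral.integral_congr hsplit,
    intervalIntegral.integral_add (intervalIntegrable_mul_natCeil_mul hn ht hker)
      ((hker'.const_mul _).sub (hker.const_mul _)),
    intervalIntegral.integral_sub (hker'.const_mul _) (hker.const_mul _),
    intervalIntegral.integral_const_mul, intervalIntegral.integral_const_mul,
    integral_mul_natCeil_mul hn ht hker, Finset.range_eq_Ico,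
    Finset.sum_eq_sum_Ico_succ_bot (Nat.succ_pos _), Nat.succ_eq_add_one, zero_add,
    Finset.Ico_add_one_right_eq_Icc]
  simp only [integral_sub_rpow_sub_one hα, integral_sub_rpow_sub_one hα', ← Finset.sum_div,
    Nat.cast_zero, zero_div, sub_zero, Real.rpow_add_one' ht hα'.ne']
  field_simp
  ring

/-- Explicit formula for `f_n(t) = ∫₀ᵗ (t-s)^{α-1} (⌈ns⌉ - ns - 1/2) ds`
when `0 < α < 1`, `n ≥ 1`, `t ∈ (0,1]` and `nt` is not an integer. -/
theorem fn_explicit_formula (α : ℝ) (hα : α ∈ Set.Ioo (0 : ℝ) 1)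
    (n : ℕ) (hn : 1 ≤ n) (t : ℝ) (ht : t ∈ Set.Ioc (0 : ℝ) 1)
    (hnt : ∀ k : ℕ, (n : ℝ) * t ≠ k) :
    ∫ s in (0 : ℝ)..t, (t - s) ^ (α - 1) * ((⌈(n : ℝ) * s⌉ : ℝ) - n * s - 1 / 2)
      = (1 / α) * ∑ k ∈ Finset.Icc 1 ⌊(n : ℝ) * t⌋₊, (t - (k : ℝ) / n) ^ α
        + (1 / (2 * α)) * t ^ α - ((n : ℝ) / (α * (α + 1))) * t ^ (α + 1) :=
  fn_explicit_formula_general α hα n hn t ht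
end

section
/- For 0 < α < 1 and 0 < γ < 1, define R_2(γ) = (α(1-α)/2) ∫₀^∞ B_2({x}) (γ+x)^{α-2} dx, where {x} is the fractional part and B_2(x) = x² - x + 1/6. Then R_2 is well-defined (the integral converges absolutely) and R_2 is nonincreasing on (0,1). -/
/-! On a unit interval `[n, n + 1]`, two integrations by parts turn
`∫ B₂({x}) f(x) dx` into `∫ (x - n)² (x - n - 1)² / 12 · f''(x) dx`, whose kernel is nonnegative.
For `γ₁ ≤ γ₂` the function `f(x) = (γ₂ + x)^(α-2) - (γ₁ + x)^(α-2)` is concave on `[0, ∞)`,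
because `(α - 2)(α - 3) > 0` and `x ↦ x^(α-4)` decreases; so every unit piece of
`∫₀^∞ B₂({x}) f(x) dx` is nonpositive, and so is the whole integral. Absolute convergence holds
since `|B₂({x})| ≤ 1/6` and `α - 2 < -1`. -/

open MeasureTheory Set Filter

lemma integrableOn_Ioi_const_add_rpow {γ p : ℝ} (hγ : 0 < γ) (hp : p < -1) :
    IntegrableOn (fun x : ℝ => (γ + x) ^ p) (Ioi 0) := by
  have h := (measurePreserving_add_left volume γ).integrableOn_image
    (measurableEmbedding_addLeft γ) (f := fun t : ℝ => t ^ p) (s := Ioi 0)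
  rw [image_const_add_Ioi, add_zero] at h
  exact h.1 (integrableOn_Ioi_rpow_of_lt hp hγ)

lemma abs_bernoulli₂_fract_le (x : ℝ) :
    |Int.fract x ^ 2 - Int.fract x + 1 / 6| ≤ 1 / 6 := by
  have h0 := Int.fract_nonneg x
  have h1 := Int.fract_lt_one x
  exact abs_le.2 ⟨by nlinarith, by nlinarith⟩

lemma integrableOn_bernoulli₂_fract_mul {f : ℝ → ℝ} {s : Set ℝ} (hf : IntegrableOn f s) :
    IntegrableOn (fun x => (Int.fract x ^ 2 - Int.fract x + 1 / 6) * f x) s :=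
  hf.bdd_mul (by fun_prop) (ae_of_all _ abs_bernoulli₂_fract_le)

/-- `t ↦ t ^ 2 - t` takes the same value at `0` and `1`, so the closed endpoint `n + 1` is no
exception. -/
lemma fract_sq_sub_fract_of_mem_Icc {n : ℤ} {x : ℝ} (hx : x ∈ Icc (n : ℝ) (n + 1)) :
    Int.fract x ^ 2 - Int.fract x = (x - n) ^ 2 - (x - n) := by
  rcases hx.2.eq_or_lt with rfl | hlt
  · rw [show (n : ℝ) + 1 = ((n + 1 : ℤ) : ℝ) by push_cast; rfl, Int.fract_intCast]
    push_cast
    ring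
  · rw [Int.fract_eq_iff.2 ⟨sub_nonneg.2 hx.1, by linarith, n, by ring⟩]

lemma hasDerivAt_const_add_rpow {γ q x : ℝ} (h : 0 < γ + x) :
    HasDerivAt (fun y => (γ + y) ^ q) (q * (γ + x) ^ (q - 1)) x := by
  simpa using ((hasDerivAt_id x).const_add γ).rpow_const (p := q) (Or.inl h.ne')

section PeanoKernel

variable {f f' f'' : ℝ → ℝ} {a : ℝ}

/-- The boundary terms of both integrations by parts vanish: `t³/3 - t²/2 + t/6` and
`t²(t-1)²/12` are zero at `t = 0, 1`. -/
theorem integral_bernoulli₂_mul_eq_integral_kernel_mul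
    (hf : ∀ x ∈ Icc a (a + 1), HasDerivAt f (f' x) x)
    (hf' : ∀ x ∈ Icc a (a + 1), HasDerivAt f' (f'' x) x)
    (hf'' : IntervalIntegrable f'' volume a (a + 1)) :
    ∫ x in a..a + 1, ((x - a) ^ 2 - (x - a) + 1 / 6) * f x =
      ∫ x in a..a + 1, (x - a) ^ 2 * (x - a - 1) ^ 2 / 12 * f'' x := by
  rw [← uIcc_of_le (by linarith : a ≤ a + 1)] at hf hf'
  have hU₁ : ∀ x, HasDerivAt (fun y => (y - a) ^ 3 / 3 - (y - a) ^ 2 / 2 + (y - a) / 6)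
      ((x - a) ^ 2 - (x - a) + 1 / 6) x := fun x => by
    have hid := (hasDerivAt_id' x).sub_const a
    refine ((((hid.pow 3).div_const 3).sub ((hid.pow 2).div_const 2)).add
      (hid.div_const 6)).congr_deriv ?_
    push_cast
    ring
  have hU₂ : ∀ x, HasDerivAt (fun y => (y - a) ^ 2 * (y - a - 1) ^ 2 / 12)
      ((x - a) ^ 3 / 3 - (x - a) ^ 2 / 2 + (x - a) / 6) x := fun x => by
    have hid := (hasDerivAt_id' x).sub_const a
    refine (((hid.pow 2).mul ((hid.sub_const 1).pow 2)).div_const 12).congr_deriv ?_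
    simp only [Pi.pow_apply]
    push_cast
    ring
  have hf'_int : IntervalIntegrable f' volume a (a + 1) :=
    ContinuousOn.intervalIntegrable fun x hx => (hf' x hx).continuousAt.continuousWithinAt
  have hB : Continuous fun x => (x - a) ^ 2 - (x - a) + 1 / 6 := by fun_prop
  have hU₁_cont : Continuous fun x => (x - a) ^ 3 / 3 - (x - a) ^ 2 / 2 + (x - a) / 6 := by
    fun_prop
  have ibp₁ := intervalIntegral.integral_mul_deriv_eq_deriv_mul (fun x _ => hU₁ x) hf
    (hB.intervalIntegrable _ _) hf'_int
  have ibp₂ := intervalIntegral.integral_mul_deriv_eq_deriv_mul (fun x _ => hU₂ x) hf'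
    (hU₁_cont.intervalIntegrable _ _) hf''
  norm_num at ibp₁ ibp₂
  linarith

theorem integral_bernoulli₂_mul_nonpos_of_deriv2_nonpos
    (hf : ∀ x ∈ Icc a (a + 1), HasDerivAt f (f' x) x)
    (hf' : ∀ x ∈ Icc a (a + 1), HasDerivAt f' (f'' x) x)
    (hf''_nonpos : ∀ x ∈ Icc a (a + 1), f'' x ≤ 0) :
    ∫ x in a..a + 1, ((x - a) ^ 2 - (x - a) + 1 / 6) * f x ≤ 0 := by
  have hab : a ≤ a + 1 := by linarith
  have hf''_int : IntervalIntegrable f'' volume a (a + 1) := by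
    have h := intervalIntegral.intervalIntegrable_deriv_of_nonneg (g := -f') (g' := -f'')
      (fun x hx => (hf' x (uIcc_of_le hab ▸ hx)).continuousAt.neg.continuousWithinAt)
      (fun x hx => (hf' x (Ioo_subset_Icc_self (by simpa [hab] using hx))).neg)
      (fun x hx => neg_nonneg.2 (hf''_nonpos x (Ioo_subset_Icc_self (by simpa [hab] using hx))))
    simpa using h.neg
  rw [integral_bernoulli₂_mul_eq_integral_kernel_mul hf hf' hf''_int]
  have h := intervalIntegral.integral_nonneg (μ := volume) hab fun x hx =>
    neg_nonneg.2 (mul_nonpos_of_nonneg_of_nonpos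
      (by positivity : 0 ≤ (x - a) ^ 2 * (x - a - 1) ^ 2 / 12) (hf''_nonpos x hx))
  rw [intervalIntegral.integral_neg] at h
  linarith

end PeanoKernel

theorem integral_Ioi_bernoulli₂_fract_mul_nonpos {f f' f'' : ℝ → ℝ}
    (hf : ∀ x ∈ Ici 0, HasDerivAt f (f' x) x) (hf' : ∀ x ∈ Ici 0, HasDerivAt f' (f'' x) x)
    (hf''_nonpos : ∀ x ∈ Ici 0, f'' x ≤ 0)
    (hint : IntegrableOn (fun x => (Int.fract x ^ 2 - Int.fract x + 1 / 6) * f x) (Ioi 0)) :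
    ∫ x in Ioi 0, (Int.fract x ^ 2 - Int.fract x + 1 / 6) * f x ≤ 0 := by
  have hIcc : ∀ n : ℕ, Icc (n : ℝ) (n + 1) ⊆ Ici 0 := fun n x hx => n.cast_nonneg.trans hx.1
  have hunit : ∀ n : ℕ,
      ∫ x in (n : ℝ)..n + 1, (Int.fract x ^ 2 - Int.fract x + 1 / 6) * f x ≤ 0 := by
    intro n
    rw [intervalIntegral.integral_congr (g := fun x => ((x - n) ^ 2 - (x - n) + 1 / 6) * f x)]
    · exact integral_bernoulli₂_mul_nonpos_of_deriv2_nonpos (fun x hx => hf x (hIcc n hx))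
        (fun x hx => hf' x (hIcc n hx)) (fun x hx => hf''_nonpos x (hIcc n hx))
    · intro x hx
      have h := fract_sq_sub_fract_of_mem_Icc (n := n) (by simpa [uIcc_of_le] using hx)
      rw [Int.cast_natCast] at h
      dsimp only
      rw [h]
  have hpartial : ∀ N : ℕ,
      ∫ x in (0 : ℝ)..N, (Int.fract x ^ 2 - Int.fract x + 1 / 6) * f x ≤ 0 := by
    intro N
    rw [← Nat.cast_zero (R := ℝ), ← intervalIntegral.sum_integral_adjacent_intervals
      (a := fun n : ℕ => (n : ℝ)) fun k _ => ?_]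
    · simpa using Finset.sum_nonpos fun n _ => hunit n
    · rw [intervalIntegrable_iff_integrableOn_Ioc_of_le (by simp)]
      exact hint.mono_set fun x hx => k.cast_nonneg.trans_lt hx.1
  exact le_of_tendsto (intervalIntegral_tendsto_integral_Ioi 0 hint tendsto_natCast_atTop_atTop)
    (Eventually.of_forall hpartial)

theorem antitoneOn_integral_bernoulli₂_fract_mul_const_add_rpow {p : ℝ} (hp : p < -1) :
    AntitoneOn
      (fun γ : ℝ => ∫ x in Ioi (0 : ℝ), (Int.fract x ^ 2 - Int.fract x + 1 / 6) * (γ + x) ^ p)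
      (Ioi 0) := by
  intro γ₁ (hγ₁ : 0 < γ₁) γ₂ (hγ₂ : 0 < γ₂) h
  have hint : ∀ {γ : ℝ}, 0 < γ →
      IntegrableOn (fun x => (Int.fract x ^ 2 - Int.fract x + 1 / 6) * (γ + x) ^ p) (Ioi 0) :=
    fun hγ => integrableOn_bernoulli₂_fract_mul (integrableOn_Ioi_const_add_rpow hγ hp)
  have hpos : ∀ {γ : ℝ}, 0 < γ → ∀ x ∈ Ici (0 : ℝ), 0 < γ + x := fun hγ x hx =>
    add_pos_of_pos_of_nonneg hγ hx
  dsimp only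
  rw [← sub_nonpos, ← integral_sub (hint hγ₂) (hint hγ₁)]
  simp only [← mul_sub]
  refine integral_Ioi_bernoulli₂_fract_mul_nonpos
    (f' := fun x => p * (γ₂ + x) ^ (p - 1) - p * (γ₁ + x) ^ (p - 1))
    (f'' := fun x => p * ((p - 1) * (γ₂ + x) ^ (p - 1 - 1)) -
      p * ((p - 1) * (γ₁ + x) ^ (p - 1 - 1)))
    (fun x hx => (hasDerivAt_const_add_rpow (hpos hγ₂ x hx)).sub
      (hasDerivAt_const_add_rpow (hpos hγ₁ x hx)))
    (fun x hx => ((hasDerivAt_const_add_rpow (hpos hγ₂ x hx)).const_mul p).sub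
      ((hasDerivAt_const_add_rpow (hpos hγ₁ x hx)).const_mul p))
    (fun x hx => ?_) (by simpa only [Pi.sub_def, mul_sub] using (hint hγ₂).sub (hint hγ₁))
  have hmono : (γ₂ + x) ^ (p - 1 - 1) ≤ (γ₁ + x) ^ (p - 1 - 1) :=
    Real.rpow_le_rpow_of_nonpos (hpos hγ₁ x hx) (by linarith) (by linarith)
  have hpp : 0 < p * (p - 1) := by nlinarith
  nlinarith

/-- For `0 < α < 1`, the function
`R₂(γ) = (α(1-α)/2) ∫₀^∞ B₂({x}) (γ+x)^{α-2} dx` is well defined (the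
integrand is integrable on `(0,∞)`) for every `γ ∈ (0,1)`, and `R₂` is
nonincreasing on `(0,1)`. Here `{x}` is the fractional part and
`B₂(x) = x² - x + 1/6`. -/
theorem R2_integrable_and_antitone (α : ℝ) (hα : α ∈ Set.Ioo (0 : ℝ) 1) :
    (∀ γ ∈ Set.Ioo (0 : ℝ) 1,
      IntegrableOn
        (fun x : ℝ => ((Int.fract x) ^ 2 - Int.fract x + 1 / 6) * (γ + x) ^ (α - 2))
        (Set.Ioi 0)) ∧
    AntitoneOn
      (fun γ : ℝ => α * (1 - α) / 2 *
        ∫ x in Set.Ioi (0 : ℝ),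
          ((Int.fract x) ^ 2 - Int.fract x + 1 / 6) * (γ + x) ^ (α - 2))
      (Set.Ioo 0 1) := by
  obtain ⟨hα₀, hα₁⟩ := hα
  have hp : α - 2 < -1 := by linarith
  refine ⟨fun γ hγ =>
    integrableOn_bernoulli₂_fract_mul (integrableOn_Ioi_const_add_rpow hγ.1 hp),
    fun γ₁ hγ₁ γ₂ hγ₂ h => ?_⟩
  exact mul_le_mul_of_nonneg_left
    (antitoneOn_integral_bernoulli₂_fract_mul_const_add_rpow hp
      (Ioo_subset_Ioi_self hγ₁) (Ioo_subset_Ioi_self hγ₂) h)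
    (by nlinarith)
end

section
/- For 0 < α < 1, let R(γ) = -(1/(α(1+α))) γ^{α+1} + (1/(2α)) γ^α - (1/12) γ^{α-1} + (1/α) R_2(γ), where R_2(γ) = (α(1-α)/2) ∫₀^∞ B_2({x})(γ+x)^{α-2} dx. Then ∫₀¹ R(γ)(1/2 - γ) dγ ≥ (1-α)(3-α) / (24 α (α+1)(α+3)) > 0. -/
/-!
`B₂(t) = t² - t + 1/6` is the second derivative of `φ(t) = t²(1-t)²/12 ≥ 0`, and `φ`, `φ'` vanish
at `0` and `1`; integrating by parts twice, `∫₀¹ B₂ u = ∫₀¹ φ u'' ≥ 0` whenever `u'' ≥ 0`. Summing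
over the periods, `∫₀^∞ B₂({x}) h(x) dx ≥ 0` for convex `h`, and applied to the convex difference
`(γ₁ + x)^(α-2) - (γ₂ + x)^(α-2)` this shows that `R₂` is nonincreasing. A nonincreasing function
has nonnegative integral against `1/2 - γ` on `[0, 1]`, so the bound is the weighted integral of the
explicit terms of `R`, which is elementary.
-/

open MeasureTheory Set intervalIntegral

noncomputable def B₂ (t : ℝ) : ℝ := t ^ 2 - t + 1 / 6

lemma abs_B₂_le {t : ℝ} (h₀ : 0 ≤ t) (h₁ : t ≤ 1) : |B₂ t| ≤ 1 / 6 := by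
  rw [B₂, abs_le]
  constructor <;> nlinarith

lemma B₂_fract_eq {n : ℕ} {x : ℝ} (hx : x ∈ Icc (n : ℝ) (n + 1)) :
    B₂ (Int.fract x) = B₂ (x - n) := by
  rcases hx.2.lt_or_eq with hlt | rfl
  · rw [← Int.fract_sub_natCast, Int.fract_eq_self.2 ⟨by linarith [hx.1], by linarith⟩]
  · rw [add_sub_cancel_left, show (n : ℝ) + 1 = ((n + 1 : ℕ) : ℝ) by push_cast; ring,
      Int.fract_natCast]
    norm_num [B₂]

lemma integral_B₂_sub_mul_nonneg (a : ℝ) {u u' u'' : ℝ → ℝ}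
    (hu : ∀ x ∈ Icc a (a + 1), HasDerivAt u (u' x) x)
    (hu' : ∀ x ∈ Icc a (a + 1), HasDerivAt u' (u'' x) x)
    (hu''_cont : ContinuousOn u'' (Icc a (a + 1)))
    (hu''_nonneg : ∀ x ∈ Icc a (a + 1), 0 ≤ u'' x) :
    0 ≤ ∫ x in a..a + 1, B₂ (x - a) * u x := by
  set φ : ℝ → ℝ := fun x => (x - a) ^ 2 * (1 - (x - a)) ^ 2 / 12
  set ψ : ℝ → ℝ := fun x => (x - a) * (1 - (x - a)) * (1 - 2 * (x - a)) / 6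
  have hd : ∀ x, HasDerivAt (fun x => x - a) 1 x := fun x => (hasDerivAt_id' x).sub_const a
  have hφ : ∀ x, HasDerivAt φ (ψ x) x := fun x => by
    refine ((((hd x).pow 2).mul (((hd x).const_sub 1).pow 2)).div_const 12).congr_deriv ?_
    simp only [ψ, Pi.pow_apply]; ring
  have hψ : ∀ x, HasDerivAt ψ (B₂ (x - a)) x := fun x => by
    refine ((((hd x).mul ((hd x).const_sub 1)).mul
      (((hd x).const_mul 2).const_sub 1)).div_const 6).congr_deriv ?_
    simp only [B₂, Pi.mul_apply]; ring
  have hab : a ≤ a + 1 := by linarith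
  have hu_cont : ContinuousOn u (Icc a (a + 1)) :=
    fun x hx => (hu x hx).continuousAt.continuousWithinAt
  have hint₁ : IntervalIntegrable (fun x => φ x * u'' x) volume a (a + 1) :=
    ((by fun_prop : Continuous φ).continuousOn.mul hu''_cont).intervalIntegrable_of_Icc hab
  have hint₂ : IntervalIntegrable (fun x => B₂ (x - a) * u x) volume a (a + 1) :=
    ((by unfold B₂; fun_prop : Continuous fun x => B₂ (x - a)).continuousOn.mul
      hu_cont).intervalIntegrable_of_Icc hab
  have hparts : ∫ x in a..a + 1, (φ x * u'' x - B₂ (x - a) * u x) = 0 := by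
    have hF : ∀ x ∈ uIcc a (a + 1), HasDerivAt (fun x => φ x * u' x - ψ x * u x)
        (φ x * u'' x - B₂ (x - a) * u x) x := fun x hx => by
      rw [uIcc_of_le hab] at hx
      exact (((hφ x).mul (hu' x hx)).sub ((hψ x).mul (hu x hx))).congr_deriv (by ring)
    rw [integral_eq_sub_of_hasDerivAt hF (hint₁.sub hint₂)]
    simp [φ, ψ]
  rw [integral_sub hint₁ hint₂, sub_eq_zero] at hparts
  rw [← hparts]
  exact integral_nonneg hab fun x hx =>
    mul_nonneg (by positivity) (hu''_nonneg x hx)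

lemma setIntegral_Ioi_B₂_fract_mul_nonneg {h h' h'' : ℝ → ℝ}
    (hint : IntegrableOn (fun x => B₂ (Int.fract x) * h x) (Ioi 0))
    (hh : ∀ x ∈ Ici 0, HasDerivAt h (h' x) x) (hh' : ∀ x ∈ Ici 0, HasDerivAt h' (h'' x) x)
    (hh''_cont : ContinuousOn h'' (Ici 0)) (hh''_nonneg : ∀ x ∈ Ici 0, 0 ≤ h'' x) :
    0 ≤ ∫ x in Ioi 0, B₂ (Int.fract x) * h x := by
  have hsub : ∀ n : ℕ, Icc (n : ℝ) (n + 1) ⊆ Ici 0 := fun n x hx => n.cast_nonneg.trans hx.1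
  have hperiod : ∀ n : ℕ, 0 ≤ ∫ x in (n : ℝ)..n + 1, B₂ (Int.fract x) * h x := fun n => by
    have hfract : EqOn (fun x => B₂ (Int.fract x) * h x) (fun x => B₂ (x - n) * h x)
        (uIcc n (n + 1)) := fun x hx => by
      rw [uIcc_of_le (by linarith)] at hx
      simp only [B₂_fract_eq hx]
    rw [integral_congr hfract]
    exact integral_B₂_sub_mul_nonneg n (fun x hx => hh x (hsub n hx))
      (fun x hx => hh' x (hsub n hx)) (hh''_cont.mono (hsub n))
      fun x hx => hh''_nonneg x (hsub n hx)
  have hpartial : ∀ N : ℕ, 0 ≤ ∫ x in (0 : ℝ)..N, B₂ (Int.fract x) * h x := fun N => by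
    have hsum := sum_integral_adjacent_intervals (a := fun k : ℕ => (k : ℝ)) (n := N)
      (f := fun x => B₂ (Int.fract x) * h x) (μ := volume) fun k _ => by
        refine (intervalIntegrable_iff_integrableOn_Ioc_of_le (by simp)).2 (hint.mono_set ?_)
        exact fun x hx => lt_of_le_of_lt k.cast_nonneg hx.1
    simp only [Nat.cast_zero, Nat.cast_succ] at hsum
    exact hsum ▸ Finset.sum_nonneg fun k _ => hperiod k
  exact ge_of_tendsto' (intervalIntegral_tendsto_integral_Ioi 0 hint tendsto_natCast_atTop_atTop)
    hpartial

lemma hasDerivAt_add_rpow (γ q : ℝ) {x : ℝ} (hx : 0 < γ + x) :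
    HasDerivAt (fun y => (γ + y) ^ q) (q * (γ + x) ^ (q - 1)) x := by
  simpa using ((hasDerivAt_id' x).const_add γ).rpow_const (p := q) (Or.inl hx.ne')

lemma integrableOn_Ioi_add_rpow {γ p : ℝ} (hγ : 0 < γ) (hp : p < -1) :
    IntegrableOn (fun x => (γ + x) ^ p) (Ioi 0) := by
  rw [← show (γ + ·) ⁻¹' Ioi γ = Ioi 0 by simp]
  exact ((measurePreserving_add_left volume γ).integrableOn_comp_preimage
    (MeasurableEquiv.addLeft γ).measurableEmbedding).2 (integrableOn_Ioi_rpow_of_lt hp hγ)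

lemma integral_Ioi_add_rpow {γ p : ℝ} (hγ : 0 < γ) (hp : p < -1) :
    ∫ x in Ioi 0, (γ + x) ^ p = -γ ^ (p + 1) / (p + 1) := by
  rw [← show (γ + ·) ⁻¹' Ioi γ = Ioi 0 by simp, ← integral_Ioi_rpow_of_lt hp hγ]
  exact (measurePreserving_add_left volume γ).setIntegral_preimage_emb
    (MeasurableEquiv.addLeft γ).measurableEmbedding (· ^ p) (Ioi γ)

lemma norm_B₂_fract_mul_add_rpow_le {γ p x : ℝ} (hx : 0 < γ + x) :
    ‖B₂ (Int.fract x) * (γ + x) ^ p‖ ≤ 1 / 6 * (γ + x) ^ p := by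
  have hpow := Real.rpow_nonneg hx.le p
  rw [norm_mul, Real.norm_eq_abs, Real.norm_of_nonneg hpow]
  exact mul_le_mul_of_nonneg_right
    (abs_B₂_le (Int.fract_nonneg x) (Int.fract_lt_one x).le) hpow

lemma integrableOn_B₂_fract_mul_add_rpow {γ p : ℝ} (hγ : 0 < γ) (hp : p < -1) :
    IntegrableOn (fun x => B₂ (Int.fract x) * (γ + x) ^ p) (Ioi 0) := by
  refine ((integrableOn_Ioi_add_rpow hγ hp).const_mul (1 / 6)).mono' ?_ ?_
  · have : Measurable B₂ := by unfold B₂; fun_prop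
    exact ((this.comp measurable_fract).mul (by fun_prop)).aestronglyMeasurable
  · exact (ae_restrict_iff' measurableSet_Ioi).2 (.of_forall fun x hx =>
      norm_B₂_fract_mul_add_rpow_le (by linarith [mem_Ioi.1 hx]))

lemma abs_integral_B₂_fract_mul_add_rpow_le {γ p : ℝ} (hγ : 0 < γ) (hp : p < -1) :
    |∫ x in Ioi 0, B₂ (Int.fract x) * (γ + x) ^ p| ≤ -1 / (6 * (p + 1)) * γ ^ (p + 1) := by
  calc |∫ x in Ioi 0, B₂ (Int.fract x) * (γ + x) ^ p|
      ≤ ∫ x in Ioi 0, 1 / 6 * (γ + x) ^ p :=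
        norm_integral_le_of_norm_le ((integrableOn_Ioi_add_rpow hγ hp).const_mul _)
          ((ae_restrict_iff' measurableSet_Ioi).2 (.of_forall fun x hx =>
            norm_B₂_fract_mul_add_rpow_le (by linarith [mem_Ioi.1 hx])))
    _ = -1 / (6 * (p + 1)) * γ ^ (p + 1) := by
        rw [MeasureTheory.integral_const_mul, integral_Ioi_add_rpow hγ hp]
        have : p + 1 ≠ 0 := by linarith
        field_simp

lemma antitoneOn_integral_B₂_fract_mul_add_rpow {p : ℝ} (hp : p < -1) :
    AntitoneOn (fun γ => ∫ x in Ioi 0, B₂ (Int.fract x) * (γ + x) ^ p) (Ioi 0) := by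
  intro γ₁ (hγ₁ : 0 < γ₁) γ₂ (hγ₂ : 0 < γ₂) hγ
  have hint₁ := integrableOn_B₂_fract_mul_add_rpow hγ₁ hp
  have hint₂ := integrableOn_B₂_fract_mul_add_rpow hγ₂ hp
  have hpos : ∀ {γ}, 0 < γ → ∀ x ∈ Ici (0 : ℝ), 0 < γ + x := fun hγ x hx => by
    linarith [mem_Ici.1 hx]
  have key := setIntegral_Ioi_B₂_fract_mul_nonneg (by simp only [mul_sub]; exact hint₁.sub hint₂)
    (h := fun x => (γ₁ + x) ^ p - (γ₂ + x) ^ p)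
    (h' := fun x => p * (γ₁ + x) ^ (p - 1) - p * (γ₂ + x) ^ (p - 1))
    (h'' := fun x => p * ((p - 1) * (γ₁ + x) ^ (p - 1 - 1))
      - p * ((p - 1) * (γ₂ + x) ^ (p - 1 - 1)))
    (fun x hx => (hasDerivAt_add_rpow γ₁ p (hpos hγ₁ x hx)).sub
      (hasDerivAt_add_rpow γ₂ p (hpos hγ₂ x hx)))
    (fun x hx => ((hasDerivAt_add_rpow γ₁ (p - 1) (hpos hγ₁ x hx)).const_mul p).sub
      ((hasDerivAt_add_rpow γ₂ (p - 1) (hpos hγ₂ x hx)).const_mul p))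
    (fun x hx => (((hasDerivAt_add_rpow γ₁ (p - 1 - 1) (hpos hγ₁ x hx)).continuousAt.const_mul _
      |>.const_mul p).sub ((hasDerivAt_add_rpow γ₂ (p - 1 - 1) (hpos hγ₂ x hx)).continuousAt
      |>.const_mul _ |>.const_mul p)).continuousWithinAt)
    (fun x hx => by
      have hle := Real.rpow_le_rpow_of_nonpos (hpos hγ₁ x hx) (by linarith : γ₁ + x ≤ γ₂ + x)
        (by linarith : p - 1 - 1 ≤ 0)
      calc 0 ≤ p * (p - 1) * ((γ₁ + x) ^ (p - 1 - 1) - (γ₂ + x) ^ (p - 1 - 1)) :=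
            mul_nonneg (by nlinarith) (sub_nonneg.2 hle)
        _ = _ := by ring)
  simp only [mul_sub] at key
  rwa [integral_sub hint₁ hint₂, sub_nonneg] at key

lemma intervalIntegrable_of_antitoneOn_of_abs_le_rpow {F : ℝ → ℝ} {b C s : ℝ} (hb : 0 ≤ b)
    (hs : -1 < s) (hF : AntitoneOn F (Ioc 0 b)) (hbound : ∀ γ ∈ Ioc 0 b, |F γ| ≤ C * γ ^ s) :
    IntervalIntegrable F volume 0 b := by
  rw [intervalIntegrable_iff_integrableOn_Ioc_of_le hb]
  refine Integrable.mono' ?_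
    (aemeasurable_restrict_of_antitoneOn measurableSet_Ioc hF).aestronglyMeasurable
    ((ae_restrict_iff' measurableSet_Ioc).2 (.of_forall hbound))
  exact (intervalIntegrable_iff_integrableOn_Ioc_of_le hb).1
    ((intervalIntegrable_rpow' hs).const_mul C)

/-- Subtracting `F m` does not change the integral because `∫ (m - x) = 0` over `[a, b]`; after
that the integrand is pointwise nonnegative. -/
lemma integral_mul_midpoint_sub_nonneg_of_antitoneOn {F : ℝ → ℝ} {a b : ℝ} (hab : a < b)
    (hF : AntitoneOn F (Ioc a b))
    (hint : IntervalIntegrable (fun x => F x * ((a + b) / 2 - x)) volume a b) :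
    0 ≤ ∫ x in a..b, F x * ((a + b) / 2 - x) := by
  set m := (a + b) / 2
  have hm : m ∈ Ioc a b := by constructor <;> simp only [m] <;> linarith
  have hweight : IntervalIntegrable (fun x => F m * (m - x)) volume a b :=
    (by fun_prop : Continuous fun x => F m * (m - x)).intervalIntegrable a b
  have hzero : ∫ x in a..b, F m * (m - x) = 0 := by
    rw [intervalIntegral.integral_const_mul, integral_sub intervalIntegrable_const
      intervalIntegrable_id, intervalIntegral.integral_const, integral_id]
    simp only [m, smul_eq_mul]; ring
  calc 0 ≤ ∫ x in a..b, (F x - F m) * (m - x) := by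
        rw [integral_of_le hab.le]
        refine setIntegral_nonneg measurableSet_Ioc fun x hx => ?_
        rcases le_total x m with hxm | hmx
        · exact mul_nonneg (sub_nonneg.2 (hF hx hm hxm)) (sub_nonneg.2 hxm)
        · exact mul_nonneg_of_nonpos_of_nonpos (sub_nonpos.2 (hF hm hx hmx)) (sub_nonpos.2 hmx)
    _ = ∫ x in a..b, F x * (m - x) := by
        simp only [sub_mul]
        rw [integral_sub hint hweight, hzero, sub_zero]

lemma intervalIntegrable_rpow_mul_half_sub {s : ℝ} (hs : -1 < s) :
    IntervalIntegrable (fun x => x ^ s * (1 / 2 - x)) volume 0 1 :=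
  (intervalIntegrable_rpow' hs).mul_continuousOn (by fun_prop)

lemma integral_rpow_mul_half_sub {s : ℝ} (hs : -1 < s) :
    ∫ x in (0 : ℝ)..1, x ^ s * (1 / 2 - x) = 1 / (2 * (s + 1)) - 1 / (s + 2) := by
  have hs₁ : s + 1 ≠ 0 := by linarith
  have hs₂ : s + 1 + 1 ≠ 0 := by linarith
  have hsplit : EqOn (fun x : ℝ => x ^ s * (1 / 2 - x)) (fun x => 1 / 2 * x ^ s - x ^ (s + 1))
      (uIcc 0 1) := fun x hx => by
    rw [uIcc_of_le zero_le_one] at hx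
    simp only [Real.rpow_add_one' hx.1 hs₁]; ring
  rw [integral_congr hsplit, integral_sub ((intervalIntegrable_rpow' hs).const_mul _)
      (intervalIntegrable_rpow' (by linarith)), intervalIntegral.integral_const_mul,
    integral_rpow (.inl hs), integral_rpow (.inl (by linarith)), Real.zero_rpow hs₁,
    Real.zero_rpow hs₂, Real.one_rpow, Real.one_rpow, show s + 1 + 1 = s + 2 by ring]
  field_simp
  ring

noncomputable def explicitPart (α γ : ℝ) : ℝ :=
  -(1 / (α * (1 + α))) * γ ^ (α + 1) + 1 / (2 * α) * γ ^ α - 1 / 12 * γ ^ (α - 1)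

lemma explicitPart_mul_half_sub (α γ : ℝ) :
    explicitPart α γ * (1 / 2 - γ) = -(1 / (α * (1 + α))) * (γ ^ (α + 1) * (1 / 2 - γ))
      + 1 / (2 * α) * (γ ^ α * (1 / 2 - γ)) - 1 / 12 * (γ ^ (α - 1) * (1 / 2 - γ)) := by
  rw [explicitPart]; ring

section explicitPart

variable {α : ℝ} (hα : 0 < α)
include hα

lemma intervalIntegrable_explicitPart_mul_half_sub :
    IntervalIntegrable (fun γ => explicitPart α γ * (1 / 2 - γ)) volume 0 1 := by
  simp only [explicitPart_mul_half_sub]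
  exact (((intervalIntegrable_rpow_mul_half_sub (by linarith)).const_mul _).add
    ((intervalIntegrable_rpow_mul_half_sub (by linarith)).const_mul _)).sub
    ((intervalIntegrable_rpow_mul_half_sub (by linarith)).const_mul _)

lemma integral_explicitPart_mul_half_sub :
    ∫ γ in (0 : ℝ)..1, explicitPart α γ * (1 / 2 - γ)
      = (1 - α) * (3 - α) / (24 * α * (α + 1) * (α + 3)) := by
  have h₁ := intervalIntegrable_rpow_mul_half_sub (s := α + 1) (by linarith)
  have h₂ := intervalIntegrable_rpow_mul_half_sub (s := α) (by linarith)
  have h₃ := intervalIntegrable_rpow_mul_half_sub (s := α - 1) (by linarith)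
  simp only [explicitPart_mul_half_sub]
  rw [integral_sub ((h₁.const_mul _).add (h₂.const_mul _)) (h₃.const_mul _),
    integral_add (h₁.const_mul _) (h₂.const_mul _), intervalIntegral.integral_const_mul,
    intervalIntegral.integral_const_mul, intervalIntegral.integral_const_mul,
    integral_rpow_mul_half_sub (by linarith), integral_rpow_mul_half_sub (by linarith),
    integral_rpow_mul_half_sub (by linarith)]
  rw [show α + 1 + 1 = α + 2 by ring, show α + 1 + 2 = α + 3 by ring,
    show α - 1 + 1 = α by ring, show α - 1 + 2 = α + 1 by ring]
  have : α + 2 ≠ 0 := by linarith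
  have : α + 3 ≠ 0 := by linarith
  field_simp
  ring

end explicitPart

/-- For `0 < α < 1`, with
`R(γ) = -(1/(α(1+α))) γ^{α+1} + (1/(2α)) γ^α - (1/12) γ^{α-1} + (1/α) R₂(γ)`
where `R₂(γ) = (α(1-α)/2) ∫₀^∞ B₂({x})(γ+x)^{α-2} dx`, we have
`∫₀¹ R(γ)(1/2 - γ) dγ ≥ (1-α)(3-α)/(24α(α+1)(α+3)) > 0`. -/
theorem R_weighted_integral_pos (α : ℝ) (hα : α ∈ Set.Ioo (0 : ℝ) 1)
    (R₂ : ℝ → ℝ)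
    (hR₂ : ∀ γ : ℝ, R₂ γ = α * (1 - α) / 2 *
      ∫ x in Set.Ioi (0 : ℝ),
        ((Int.fract x) ^ 2 - Int.fract x + 1 / 6) * (γ + x) ^ (α - 2))
    (R : ℝ → ℝ)
    (hR : ∀ γ : ℝ, R γ = -(1 / (α * (1 + α))) * γ ^ (α + 1)
        + (1 / (2 * α)) * γ ^ α - (1 / 12) * γ ^ (α - 1) + (1 / α) * R₂ γ) :
    (1 - α) * (3 - α) / (24 * α * (α + 1) * (α + 3))
        ≤ ∫ γ in (0 : ℝ)..1, R γ * (1 / 2 - γ) ∧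
      0 < (1 - α) * (3 - α) / (24 * α * (α + 1) * (α + 3)) := by
  obtain ⟨hα₀, hα₁⟩ := hα
  have hp : α - 2 < -1 := by linarith
  have hc : 0 ≤ α * (1 - α) / 2 := by nlinarith
  have hR₂_anti : AntitoneOn R₂ (Ioc 0 1) := fun γ₁ h₁ γ₂ h₂ h => by
    rw [hR₂, hR₂]
    exact mul_le_mul_of_nonneg_left
      (antitoneOn_integral_B₂_fract_mul_add_rpow hp h₁.1 h₂.1 h) hc
  have hR₂_int : IntervalIntegrable (fun γ => R₂ γ * (1 / 2 - γ)) volume 0 1 := by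
    refine (intervalIntegrable_of_antitoneOn_of_abs_le_rpow (s := α - 2 + 1)
      (C := α * (1 - α) / 2 * (-1 / (6 * (α - 2 + 1)))) zero_le_one (by linarith) hR₂_anti
      fun γ hγ => ?_).mul_continuousOn (by fun_prop)
    rw [hR₂, abs_mul, abs_of_nonneg hc, mul_assoc]
    exact mul_le_mul_of_nonneg_left (abs_integral_B₂_fract_mul_add_rpow_le hγ.1 hp) hc
  have hR₂_weighted : 0 ≤ ∫ γ in (0 : ℝ)..1, R₂ γ * (1 / 2 - γ) := by
    simpa using integral_mul_midpoint_sub_nonneg_of_antitoneOn zero_lt_one hR₂_anti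
      (by simpa using hR₂_int)
  have hsplit : ∀ γ, R γ * (1 / 2 - γ)
      = explicitPart α γ * (1 / 2 - γ) + 1 / α * (R₂ γ * (1 / 2 - γ)) := fun γ => by
    rw [hR, explicitPart]; ring
  refine ⟨?_, div_pos (mul_pos (by linarith) (by linarith)) (by positivity)⟩
  rw [integral_congr fun γ _ => hsplit γ,
    integral_add (intervalIntegrable_explicitPart_mul_half_sub hα₀) (hR₂_int.const_mul _),
    intervalIntegral.integral_const_mul, integral_explicitPart_mul_half_sub hα₀]
  exact le_add_of_nonneg_right (mul_nonneg (by positivity) hR₂_weighted)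
end

section
/- For 0 < α < 1, n ≥ 1, and t ∈ (0,1] with nt ∉ ℕ, let f_n(t) = ∫₀ᵗ (t-s)^{α-1}(⌈ns⌉ - ns - 1/2) ds and let R(γ) be as in the paper (R(γ) = -(1/(α(1+α)))γ^{α+1} + (1/(2α))γ^α - (1/12)γ^{α-1} + (1/α)R_2(γ)). Then |n^α f_n(t) - R({nt})| ≤ (1/6)(nt)^{α-1}. -/
/-!
Substituting `u = ns` turns `n^α f_n(t)` into `∫₀ᵀ (T-u)^{α-1}(⌈u⌉-u-1/2) du` with `T = nt = γ + m`,
`γ = {T} > 0`, `m = ⌊T⌋`. Over `[m, T]` the integrand is elementary. On `[0, m]` the reflection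
`u = m - x` gives `∫₀^m (γ+x)^{α-1}({x}-1/2) dx`, and one integration by parts against `B₂({x})/2`
(`B₂ = bernoulliFun 2`), which is continuous with right derivative `{x} - 1/2`, turns it into
`(T^{α-1} - γ^{α-1})/12 + ((1-α)/2) ∫₀^m B₂({x})(γ+x)^{α-2} dx` (first-order Euler–Maclaurin).
Subtracting `R(γ)` leaves `T^{α-1}/12 - ((1-α)/2) ∫_m^∞ B₂({x})(γ+x)^{α-2} dx`, and `|B₂| ≤ 1/6`
bounds this tail by `T^{α-1}/(6(1-α))`.
-/

open MeasureTheory Set Filter Topology intervalIntegral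
open scoped Interval

lemma hasDerivWithinAt_fract_Ici (x : ℝ) : HasDerivWithinAt Int.fract 1 (Ici x) x := by
  have hfloor : ∀ᶠ y in 𝓝[≥] x, ⌊y⌋ = ⌊x⌋ := tendsto_pure.1 (tendsto_floor_right_pure_floor x)
  refine ((hasDerivAt_id x).sub_const (⌊x⌋ : ℝ)).hasDerivWithinAt.congr_of_eventuallyEq ?_ rfl
  filter_upwards [hfloor] with y hy
  rw [← Int.self_sub_floor, hy, id]

lemma continuous_bernoulliFun_two_fract : Continuous fun x => bernoulliFun 2 (Int.fract x) :=
  (continuous_bernoulliFun (k := 2)).continuousOn.comp_fract'' (by simp [bernoulliFun_eval_one])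

lemma abs_bernoulliFun_two_fract_le (x : ℝ) : |bernoulliFun 2 (Int.fract x)| ≤ 1 / 6 := by
  have h0 := Int.fract_nonneg x
  have h1 := Int.fract_lt_one x
  rw [bernoulliFun_two, abs_le]
  constructor <;> nlinarith

lemma intervalIntegrable_fract (a b : ℝ) : IntervalIntegrable Int.fract volume a b := by
  have hfloor : Monotone fun x : ℝ => (⌊x⌋ : ℝ) := fun x y h => Int.cast_mono (Int.floor_mono h)
  exact (continuous_id.intervalIntegrable a b).sub hfloor.intervalIntegrable

theorem integral_mul_fract_sub_half {g g' : ℝ → ℝ} {a b : ℤ} (hg : ContinuousOn g [[(a : ℝ), b]])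
    (hgg' : ∀ x ∈ Ioo (min (a : ℝ) b) (max (a : ℝ) b), HasDerivAt g (g' x) x)
    (hg' : IntervalIntegrable g' volume a b) :
    ∫ x in (a : ℝ)..b, g x * (Int.fract x - 1 / 2)
      = (g b - g a) / 12 - (∫ x in (a : ℝ)..b, g' x * bernoulliFun 2 (Int.fract x)) / 2 := by
  have hv (x : ℝ) : HasDerivWithinAt (fun y => bernoulliFun 2 (Int.fract y) / 2)
      (Int.fract x - 1 / 2) (Ioi x) x := by
    have := (((hasDerivAt_bernoulliFun 2 (Int.fract x)).comp_hasDerivWithinAt x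
      (hasDerivWithinAt_fract_Ici x)).div_const 2).mono Ioi_subset_Ici_self
    refine this.congr_deriv ?_
    rw [bernoulliFun_one]
    ring
  rw [integral_mul_deriv_eq_deriv_mul_of_hasDeriv_right hg
    (continuous_bernoulliFun_two_fract.div_const 2).continuousOn
    (fun x hx => (hgg' x hx).hasDerivWithinAt) (fun x _ => hv x) hg'
    ((intervalIntegrable_fract _ _).sub intervalIntegrable_const)]
  simp only [Int.fract_intCast, bernoulliFun_two, ← mul_div_assoc, intervalIntegral.integral_div]
  ring

lemma integral_sub_rpow {r : ℝ} (hr : -1 < r) (a T : ℝ) :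
    ∫ u in a..T, (T - u) ^ r = (T - a) ^ (r + 1) / (r + 1) := by
  rw [integral_comp_sub_left (fun y => y ^ r), sub_self, integral_rpow (Or.inl hr),
    Real.zero_rpow (by linarith), sub_zero]

lemma intervalIntegrable_sub_rpow {r : ℝ} (hr : -1 < r) (a b T : ℝ) :
    IntervalIntegrable (fun u => (T - u) ^ r) volume a b := by
  simpa using (intervalIntegrable_rpow' hr (a := T - a) (b := T - b)).comp_sub_left T

lemma intervalIntegrable_rpow_sub_mul_ceil_sub_half {r : ℝ} (hr : -1 < r) (a b T : ℝ) :
    IntervalIntegrable (fun u => (T - u) ^ r * ((⌈u⌉ : ℝ) - u - 1 / 2)) volume a b := by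
  have hbound (u : ℝ) : ‖(⌈u⌉ : ℝ) - u - 1 / 2‖ ≤ 1 := by
    have := Int.le_ceil u
    have := Int.ceil_lt_add_one u
    rw [Real.norm_eq_abs, abs_le]
    constructor <;> linarith
  have hmeas : Measurable fun u : ℝ => (⌈u⌉ : ℝ) - u - 1 / 2 := by fun_prop
  rw [intervalIntegrable_iff]
  exact (intervalIntegrable_iff.1 (intervalIntegrable_sub_rpow hr a b T)).mul_bdd
    hmeas.aestronglyMeasurable (ae_of_all _ hbound)

lemma integral_rpow_sub_mul_ceil_sub_half_of_le_add_one {α T : ℝ} (hα : 0 < α) {m : ℤ}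
    (hm : (m : ℝ) ≤ T) (hT : T ≤ m + 1) :
    ∫ u in (m : ℝ)..T, (T - u) ^ (α - 1) * ((⌈u⌉ : ℝ) - u - 1 / 2)
      = (T - m) ^ (α + 1) / (α + 1) + (1 / 2 - (T - m)) * (T - m) ^ α / α := by
  have hpiece : ∀ u ∈ Ι (m : ℝ) T, (T - u) ^ (α - 1) * ((⌈u⌉ : ℝ) - u - 1 / 2)
      = (T - u) ^ α + (1 / 2 - (T - m)) * (T - u) ^ (α - 1) := by
    intro u hu
    rw [uIoc_of_le hm] at hu
    have hceil : ⌈u⌉ = m + 1 :=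
      Int.ceil_eq_iff.2 ⟨by push_cast; linarith [hu.1], by push_cast; linarith [hu.2]⟩
    have hpow : (T - u) ^ α = (T - u) ^ (α - 1) * (T - u) := by
      simpa using Real.rpow_add_one' (sub_nonneg.2 hu.2) (y := α - 1) (by simp; linarith)
    rw [hceil, hpow]
    push_cast
    ring
  rw [integral_congr_ae (ae_of_all _ hpiece),
    integral_add (intervalIntegrable_sub_rpow (by linarith) _ _ _)
      ((intervalIntegrable_sub_rpow (by linarith) _ _ _).const_mul _),
    intervalIntegral.integral_const_mul, integral_sub_rpow (by linarith),
    integral_sub_rpow (by linarith),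
    sub_add_cancel]
  ring

lemma integral_rpow_sub_mul_ceil_sub_half_eq_fract (β T : ℝ) (m : ℤ) :
    ∫ u in (0 : ℝ)..m, (T - u) ^ β * ((⌈u⌉ : ℝ) - u - 1 / 2)
      = ∫ x in (0 : ℝ)..m, (T - m + x) ^ β * (Int.fract x - 1 / 2) := by
  have hreflect := integral_comp_sub_left (a := 0) (b := (m : ℝ))
    (fun u => (T - u) ^ β * ((⌈u⌉ : ℝ) - u - 1 / 2)) m
  rw [sub_self, sub_zero] at hreflect
  rw [← hreflect]
  refine integral_congr fun x _ => ?_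
  have hceil : ((⌈(m : ℝ) - x⌉ : ℤ) : ℝ) = m - ⌊x⌋ := by
    rw [sub_eq_add_neg, Int.ceil_intCast_add, Int.ceil_neg]
    push_cast
    ring
  rw [hceil, ← Int.self_sub_floor, show T - (m - x) = T - m + x by ring]
  ring

lemma integral_add_rpow_mul_fract_sub_half {c s : ℝ} (hc : 0 < c) {m : ℤ} (hm : 0 ≤ m) :
    ∫ x in (0 : ℝ)..m, (c + x) ^ s * (Int.fract x - 1 / 2)
      = ((c + m) ^ s - c ^ s) / 12
        - s / 2 * ∫ x in (0 : ℝ)..m, bernoulliFun 2 (Int.fract x) * (c + x) ^ (s - 1) := by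
  have hm' : (0 : ℝ) ≤ m := by exact_mod_cast hm
  have hpos : ∀ x ∈ [[(0 : ℝ), m]], 0 < c + x := fun x hx => by
    rw [uIcc_of_le hm'] at hx
    linarith [hx.1]
  have hderiv : ∀ x ∈ [[(0 : ℝ), m]], HasDerivAt (fun y => (c + y) ^ s) (s * (c + x) ^ (s - 1)) x :=
    fun x hx => by
      simpa using ((hasDerivAt_id x).const_add c).rpow_const (p := s) (Or.inl (hpos x hx).ne')
  have hcont (r : ℝ) : ContinuousOn (fun x => (c + x) ^ r) [[(0 : ℝ), m]] :=
    fun x hx => (continuousAt_const.add continuousAt_id).rpow_const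
      (Or.inl (hpos x hx).ne') |>.continuousWithinAt
  have := integral_mul_fract_sub_half (a := 0) (b := m) (g' := fun x => s * (c + x) ^ (s - 1))
    (by simpa using hcont s) (fun x hx => hderiv x (Ioo_subset_Icc_self (by simpa using hx)))
    (by simpa using ((hcont (s - 1)).const_mul s).intervalIntegrable)
  have hconst : ∫ x in (0 : ℝ)..m, s * (c + x) ^ (s - 1) * bernoulliFun 2 (Int.fract x)
      = s * ∫ x in (0 : ℝ)..m, bernoulliFun 2 (Int.fract x) * (c + x) ^ (s - 1) := by
    rw [← intervalIntegral.integral_const_mul]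
    congr 1 with x
    ring
  rw [Int.cast_zero, add_zero, hconst] at this
  rw [this]
  ring

section Tail

variable {c s a : ℝ}

lemma hasDerivAt_add_rpow_div (hs : s ≠ -1) {x : ℝ} (hx : 0 < c + x) :
    HasDerivAt (fun y => (c + y) ^ (s + 1) / (s + 1)) ((c + x) ^ s) x := by
  have hs' : s + 1 ≠ 0 := fun h => hs (by linarith)
  refine ((((hasDerivAt_id x).const_add c).rpow_const (p := s + 1)
    (Or.inl hx.ne')).div_const (s + 1)).congr_deriv ?_
  field_simp
  simp

lemma tendsto_add_rpow_div_atTop (hs : s < -1) :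
    Tendsto (fun y => (c + y) ^ (s + 1) / (s + 1)) atTop (𝓝 0) := by
  have h := (tendsto_rpow_neg_atTop (y := -(s + 1)) (by linarith)).comp
    (tendsto_atTop_add_const_left atTop c tendsto_id)
  simpa using h.div_const (s + 1)

lemma integrableOn_Ioi_add_rpow_s4 (hs : s < -1) (ha : 0 < c + a) :
    IntegrableOn (fun x => (c + x) ^ s) (Ioi a) :=
  integrableOn_Ioi_deriv_of_nonneg'
    (fun x hx => hasDerivAt_add_rpow_div hs.ne (by linarith [hx.out]))
    (fun x hx => Real.rpow_nonneg (by linarith [hx.out]) s) (tendsto_add_rpow_div_atTop hs)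

lemma integral_Ioi_add_rpow_s4 (hs : s < -1) (ha : 0 < c + a) :
    ∫ x in Ioi a, (c + x) ^ s = -(c + a) ^ (s + 1) / (s + 1) := by
  rw [integral_Ioi_of_hasDerivAt_of_nonneg'
    (fun x hx => hasDerivAt_add_rpow_div hs.ne (by linarith [hx.out]))
    (fun x hx => Real.rpow_nonneg (by linarith [hx.out]) s) (tendsto_add_rpow_div_atTop hs)]
  ring

lemma integrableOn_Ioi_bernoulliFun_two_fract_mul (hs : s < -1) (ha : 0 < c + a) :
    IntegrableOn (fun x => bernoulliFun 2 (Int.fract x) * (c + x) ^ s) (Ioi a) :=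
  (integrableOn_Ioi_add_rpow_s4 hs ha).bdd_mul continuous_bernoulliFun_two_fract.aestronglyMeasurable
    (ae_of_all _ abs_bernoulliFun_two_fract_le)

lemma abs_integral_Ioi_bernoulliFun_two_fract_mul_le (hs : s < -1) (ha : 0 < c + a) :
    |∫ x in Ioi a, bernoulliFun 2 (Int.fract x) * (c + x) ^ s|
      ≤ (c + a) ^ (s + 1) / (6 * (-1 - s)) := by
  have hle : ∀ᵐ x ∂(volume.restrict (Ioi a)),
      ‖bernoulliFun 2 (Int.fract x) * (c + x) ^ s‖ ≤ 1 / 6 * (c + x) ^ s := by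
    refine ae_restrict_of_forall_mem measurableSet_Ioi fun x hx => ?_
    have hpow : 0 ≤ (c + x) ^ s := Real.rpow_nonneg (by linarith [hx.out]) s
    rw [norm_mul, Real.norm_eq_abs, Real.norm_of_nonneg hpow]
    exact mul_le_mul_of_nonneg_right (abs_bernoulliFun_two_fract_le x) hpow
  calc _ ≤ ∫ x in Ioi a, 1 / 6 * (c + x) ^ s :=
        norm_integral_le_of_norm_le ((integrableOn_Ioi_add_rpow_s4 hs ha).const_mul _) hle
    _ = _ := by
      have hs₁ : s + 1 ≠ 0 := by linarith
      have hs₂ : -1 - s ≠ 0 := by linarith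
      rw [MeasureTheory.integral_const_mul, integral_Ioi_add_rpow_s4 hs ha]
      field_simp
      ring

end Tail

lemma rpow_mul_integral_rpow_sub_mul_comp_mul {α c t : ℝ} (hc : 0 < c) (ht : 0 ≤ t) (f : ℝ → ℝ) :
    c ^ α * ∫ s in (0 : ℝ)..t, (t - s) ^ (α - 1) * f (c * s)
      = ∫ u in (0 : ℝ)..c * t, (c * t - u) ^ (α - 1) * f u := by
  have hscale := smul_integral_comp_mul_left (a := 0) (b := t)
    (fun u => (c * t - u) ^ (α - 1) * f u) c
  rw [mul_zero] at hscale
  rw [← hscale, smul_eq_mul, ← intervalIntegral.integral_const_mul,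
    ← intervalIntegral.integral_const_mul]
  refine integral_congr_ae (ae_of_all _ fun s hs => ?_)
  rw [uIoc_of_le ht] at hs
  rw [← mul_sub, Real.mul_rpow hc.le (sub_nonneg.2 hs.2), Real.rpow_sub_one hc.ne']
  field_simp

theorem integral_rpow_sub_mul_ceil_sub_half {α γ : ℝ} (hα0 : 0 < α) (hα1 : α < 1) (hγ0 : 0 < γ)
    (hγ1 : γ ≤ 1) {m : ℤ} (hm : 0 ≤ m) :
    ∫ u in (0 : ℝ)..γ + m, (γ + m - u) ^ (α - 1) * ((⌈u⌉ : ℝ) - u - 1 / 2)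
      = -(1 / (α * (1 + α))) * γ ^ (α + 1) + 1 / (2 * α) * γ ^ α - 1 / 12 * γ ^ (α - 1)
          + (1 - α) / 2 * (∫ x in Ioi 0, bernoulliFun 2 (Int.fract x) * (γ + x) ^ (α - 2))
        + ((γ + m) ^ (α - 1) / 12
          - (1 - α) / 2 *
            ∫ x in Ioi (m : ℝ), bernoulliFun 2 (Int.fract x) * (γ + x) ^ (α - 2)) := by
  have hr : -1 < α - 1 := by linarith
  have hm' : (0 : ℝ) ≤ m := by exact_mod_cast hm
  rw [← integral_add_adjacent_intervals (b := (m : ℝ))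
      (intervalIntegrable_rpow_sub_mul_ceil_sub_half hr _ _ _)
      (intervalIntegrable_rpow_sub_mul_ceil_sub_half hr _ _ _),
    integral_rpow_sub_mul_ceil_sub_half_eq_fract,
    integral_rpow_sub_mul_ceil_sub_half_of_le_add_one hα0 (by linarith) (by linarith),
    add_sub_cancel_right, integral_add_rpow_mul_fract_sub_half hγ0 hm,
    show α - 1 - 1 = α - 2 by ring,
    ← integral_interval_add_Ioi (a := 0) (b := m)
      (integrableOn_Ioi_bernoulliFun_two_fract_mul (c := γ) (s := α - 2) (by linarith)
        (by simpa))
      (integrableOn_Ioi_bernoulliFun_two_fract_mul (c := γ) (s := α - 2) (by linarith)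
        (by linarith)),
    Real.rpow_add_one hγ0.ne']
  field_simp
  ring

lemma abs_rpow_div_twelve_sub_mul_integral_Ioi_le {α γ : ℝ} (hα1 : α < 1) (hγ0 : 0 < γ) {m : ℤ}
    (hm : 0 ≤ m) :
    |(γ + m) ^ (α - 1) / 12
        - (1 - α) / 2 * ∫ x in Ioi (m : ℝ), bernoulliFun 2 (Int.fract x) * (γ + x) ^ (α - 2)|
      ≤ 1 / 6 * (γ + m) ^ (α - 1) := by
  have hm' : (0 : ℝ) ≤ m := by exact_mod_cast hm
  have htail := abs_integral_Ioi_bernoulliFun_two_fract_mul_le (c := γ) (a := m)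
    (by linarith : α - 2 < -1) (by linarith)
  rw [show α - 2 + 1 = α - 1 by ring, show -1 - (α - 2) = 1 - α by ring] at htail
  have hα1' : 1 - α ≠ 0 := by linarith
  set tail := ∫ x in Ioi (m : ℝ), bernoulliFun 2 (Int.fract x) * (γ + x) ^ (α - 2)
  calc _ ≤ (γ + m) ^ (α - 1) / 12 + (1 - α) / 2 * |tail| := by
        refine (abs_sub _ _).trans_eq ?_
        rw [abs_of_nonneg (by positivity), abs_mul, abs_of_pos (by linarith)]
    _ ≤ (γ + m) ^ (α - 1) / 12 + (1 - α) / 2 * ((γ + m) ^ (α - 1) / (6 * (1 - α))) := by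
        gcongr
    _ = 1 / 6 * (γ + m) ^ (α - 1) := by
        field_simp
        ring

theorem nalpha_fn_close_to_R_general (α : ℝ) (hα : α ∈ Set.Ioo (0 : ℝ) 1)
    (R₂ : ℝ → ℝ)
    (hR₂ : ∀ γ : ℝ, R₂ γ = α * (1 - α) / 2 *
      ∫ x in Set.Ioi (0 : ℝ),
        ((Int.fract x) ^ 2 - Int.fract x + 1 / 6) * (γ + x) ^ (α - 2))
    (R : ℝ → ℝ)
    (hR : ∀ γ : ℝ, R γ = -(1 / (α * (1 + α))) * γ ^ (α + 1)
        + (1 / (2 * α)) * γ ^ α - (1 / 12) * γ ^ (α - 1) + (1 / α) * R₂ γ)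
    (n : ℕ) (t : ℝ) (ht : t ∈ Set.Ioc (0 : ℝ) 1)
    (hnt : ∀ k : ℕ, (n : ℝ) * t ≠ k) :
    |(n : ℝ) ^ α *
        (∫ s in (0 : ℝ)..t, (t - s) ^ (α - 1) * ((⌈(n : ℝ) * s⌉ : ℝ) - n * s - 1 / 2))
      - R (Int.fract ((n : ℝ) * t))|
      ≤ (1 / 6) * ((n : ℝ) * t) ^ (α - 1) := by
  obtain ⟨hα0, hα1⟩ := hα
  have hT : 0 < (n : ℝ) * t :=
    lt_of_le_of_ne (by positivity [ht.1.le]) (by simpa using (hnt 0).symm)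
  set γ := Int.fract ((n : ℝ) * t)
  set m := ⌊(n : ℝ) * t⌋
  have hγ0 : 0 < γ := Int.fract_pos.2 fun h =>
    hnt ⌊(n : ℝ) * t⌋₊ (by rwa [natCast_floor_eq_intCast_floor hT.le])
  have hm : 0 ≤ m := Int.floor_nonneg.2 hT.le
  have hB (x : ℝ) : Int.fract x ^ 2 - Int.fract x + 1 / 6 = bernoulliFun 2 (Int.fract x) := by
    simp [bernoulliFun_two]
  simp only [hB] at hR₂
  rw [rpow_mul_integral_rpow_sub_mul_comp_mul (pos_of_mul_pos_left hT ht.1.le) ht.1.le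
      (fun u => (⌈u⌉ : ℝ) - u - 1 / 2),
    ← Int.fract_add_floor ((n : ℝ) * t),
    integral_rpow_sub_mul_ceil_sub_half hα0 hα1 hγ0 (Int.fract_lt_one _).le hm, hR, hR₂]
  calc _ = _ := by
        congr 1
        field_simp
        ring
    _ ≤ _ := abs_rpow_div_twelve_sub_mul_integral_Ioi_le hα1 hγ0 hm

/-- For `0 < α < 1`, `n ≥ 1`, `t ∈ (0,1]` with `nt ∉ ℕ`, letting
`f_n(t) = ∫₀ᵗ (t-s)^{α-1}(⌈ns⌉ - ns - 1/2) ds` and `R` as in the paper,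
we have `|n^α f_n(t) - R({nt})| ≤ (1/6)(nt)^{α-1}`. -/
theorem nalpha_fn_close_to_R (α : ℝ) (hα : α ∈ Set.Ioo (0 : ℝ) 1)
    (R₂ : ℝ → ℝ)
    (hR₂ : ∀ γ : ℝ, R₂ γ = α * (1 - α) / 2 *
      ∫ x in Set.Ioi (0 : ℝ),
        ((Int.fract x) ^ 2 - Int.fract x + 1 / 6) * (γ + x) ^ (α - 2))
    (R : ℝ → ℝ)
    (hR : ∀ γ : ℝ, R γ = -(1 / (α * (1 + α))) * γ ^ (α + 1)
        + (1 / (2 * α)) * γ ^ α - (1 / 12) * γ ^ (α - 1) + (1 / α) * R₂ γ)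
    (n : ℕ) (hn : 1 ≤ n) (t : ℝ) (ht : t ∈ Set.Ioc (0 : ℝ) 1)
    (hnt : ∀ k : ℕ, (n : ℝ) * t ≠ k) :
    |(n : ℝ) ^ α *
        (∫ s in (0 : ℝ)..t, (t - s) ^ (α - 1) * ((⌈(n : ℝ) * s⌉ : ℝ) - n * s - 1 / 2))
      - R (Int.fract ((n : ℝ) * t))|
      ≤ (1 / 6) * ((n : ℝ) * t) ^ (α - 1) :=
  nalpha_fn_close_to_R_general α hα R₂ hR₂ R hR n t ht hnt
end

section
/- Let F(a,b,c) = a/√(bc) on the domain b, c > 0, and let U = (x₁₂, x₁₁, x₂₂) with x₁₁, x₂₂ > 0. Let Σ_r be the symmetric 3×3 matrix with entries Σ_r[1,1] = x₁₁ + x₂₂ + 2r x₁₂, Σ_r[1,2] = Σ_r[2,1] = 2x₁₂ + 2r x₁₁, Σ_r[1,3] = Σ_r[3,1] = 2x₁₂ + 2r x₂₂, Σ_r[2,2] = 4x₁₁, Σ_r[2,3] = Σ_r[3,2] = 4r x₁₂, Σ_r[3,3] = 4x₂₂. Then ∇F(U)ᵀ Σ_r ∇F(U) = (x₁₁ x₂₂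 - x₁₂²)(x₁₁ + x₂₂ - 2r x₁₂) / (x₁₁ x₂₂)². -/
/-! Factoring `(x₁₁ x₂₂)^{-1/2}` out of the gradient leaves the rational vector
`(1, -x₁₂/(2x₁₁), -x₁₂/(2x₂₂))`, so the quadratic form is `(x₁₁ x₂₂)⁻¹` times a rational
function and the identity reduces to a polynomial one. -/

lemma Matrix.sum_sum_const_mul_eq_sq_mul {ι R : Type*} [Fintype ι] [CommSemiring R]
    (s : R) (v : ι → R) (S : Matrix ι ι R) :
    ∑ i, ∑ j, s * v i * S i j * (s * v j) = s ^ 2 * ∑ i, ∑ j, v i * S i j * v j := by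
  simp only [Finset.mul_sum]
  exact Finset.sum_congr rfl fun _ _ => Finset.sum_congr rfl fun _ _ => by ring

lemma Real.rpow_neg_half_sq {x : ℝ} (hx : 0 ≤ x) : (x ^ (-(1 : ℝ) / 2)) ^ 2 = x⁻¹ := by
  rw [← Real.rpow_natCast, ← Real.rpow_mul hx]
  norm_num [Real.rpow_neg_one]

lemma Real.rpow_neg_three_halves_mul_rpow_neg_half {b c : ℝ} (hb : 0 < b) (hc : 0 < c) :
    b ^ (-(3 : ℝ) / 2) * c ^ (-(1 : ℝ) / 2) = (b * c) ^ (-(1 : ℝ) / 2) / b := by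
  rw [Real.mul_rpow hb.le hc.le, show (-(3 : ℝ) / 2) = -(1 : ℝ) / 2 + -1 by ring,
    Real.rpow_add hb, Real.rpow_neg_one]
  ring

lemma gradF_apply_eq_rpow_mul (x₁₂ x₁₁ x₂₂ : ℝ) (h₁ : 0 < x₁₁) (h₂ : 0 < x₂₂) (i : Fin 3) :
    ![(x₁₁ * x₂₂) ^ (-(1 : ℝ) / 2),
        -(x₁₂ / 2) * x₁₁ ^ (-(3 : ℝ) / 2) * x₂₂ ^ (-(1 : ℝ) / 2),
        -(x₁₂ / 2) * x₁₁ ^ (-(1 : ℝ) / 2) * x₂₂ ^ (-(3 : ℝ) / 2)] i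
      = (x₁₁ * x₂₂) ^ (-(1 : ℝ) / 2) * ![1, -x₁₂ / (2 * x₁₁), -x₁₂ / (2 * x₂₂)] i := by
  have h₁₁ := Real.rpow_neg_three_halves_mul_rpow_neg_half h₁ h₂
  have h₂₂ := Real.rpow_neg_three_halves_mul_rpow_neg_half h₂ h₁
  rw [mul_comm x₂₂] at h₂₂
  fin_cases i
  · simp
  · simp only [Fin.mk_one, Matrix.cons_val_one, Matrix.cons_val_zero]
    linear_combination (-x₁₂ / 2) * h₁₁
  · simp only [Fin.reduceFinMk, Matrix.cons_val]
    linear_combination (-x₁₂ / 2) * h₂₂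

/-- Quadratic form identity: with `F(a,b,c) = a/√(bc)`,
`U = (x₁₂, x₁₁, x₂₂)`, `∇F(U) = ((x₁₁x₂₂)^{-1/2}, -(x₁₂/2)x₁₁^{-3/2}x₂₂^{-1/2},
-(x₁₂/2)x₁₁^{-1/2}x₂₂^{-3/2})`, and `Σ_r` the indicated symmetric matrix,
`∇F(U)ᵀ Σ_r ∇F(U) = (x₁₁x₂₂ - x₁₂²)(x₁₁ + x₂₂ - 2r x₁₂)/(x₁₁x₂₂)²`. -/
theorem gradF_quadratic_form (r x₁₂ x₁₁ x₂₂ : ℝ) (h₁ : 0 < x₁₁) (h₂ : 0 < x₂₂) :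
    let g : Fin 3 → ℝ :=
      ![(x₁₁ * x₂₂) ^ (-(1 : ℝ) / 2),
        -(x₁₂ / 2) * x₁₁ ^ (-(3 : ℝ) / 2) * x₂₂ ^ (-(1 : ℝ) / 2),
        -(x₁₂ / 2) * x₁₁ ^ (-(1 : ℝ) / 2) * x₂₂ ^ (-(3 : ℝ) / 2)]
    let Sr : Matrix (Fin 3) (Fin 3) ℝ :=
      !![x₁₁ + x₂₂ + 2 * r * x₁₂, 2 * x₁₂ + 2 * r * x₁₁, 2 * x₁₂ + 2 * r * x₂₂;
         2 * x₁₂ + 2 * r * x₁₁, 4 * x₁₁, 4 * r * x₁₂;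
         2 * x₁₂ + 2 * r * x₂₂, 4 * r * x₁₂, 4 * x₂₂]
    ∑ i : Fin 3, ∑ j : Fin 3, g i * Sr i j * g j
      = (x₁₁ * x₂₂ - x₁₂ ^ 2) * (x₁₁ + x₂₂ - 2 * r * x₁₂) / (x₁₁ * x₂₂) ^ 2 := by
  intro g Sr
  simp only [g, gradF_apply_eq_rpow_mul x₁₂ x₁₁ x₂₂ h₁ h₂, Matrix.sum_sum_const_mul_eq_sq_mul,
    Real.rpow_neg_half_sq (mul_pos h₁ h₂).le]
  simp only [Sr, Fin.sum_univ_three, Matrix.of_apply, Matrix.cons_val', Matrix.cons_val_fin_one,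
    Matrix.cons_val_zero, Matrix.cons_val_one, Matrix.cons_val]
  field_simp
  ring
end

section
/- Let 0 < α < 1 and define, for n ≥ 1 and t ∈ [0,1], V_n(t) = 2 ∫₀ᵗ f_n(s) (⌈ns⌉ - ns - 1/2) ds where f_n(s) = ∫₀ˢ (s-u)^{α-1}(⌈nu⌉ - nu - 1/2) du. Then there is a constant M_α depending only on α such that |V_n(t)| ≤ M_α n^{-α} for all n ≥ 1 and t ∈ [0,1]; hence V_n(t) → 0 as n → ∞. -/
/-
The sawtooth `⌈x⌉ - x - 1/2` agrees almost everywhere with `1/2 - {x}`, which has the continuous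
right-antiderivative `{x}(1 - {x})/2 ∈ [0, 1/8]`. So at frequency `c` the sawtooth has a primitive
of size at most `1/(8c)`, and integrating it by parts against the increasing kernel `(s - u)^(α-1)`
on `[0, s - 1/c]` costs at most `c^(-α)/4`. On the last stretch `[s - 1/c, s]`, next to the
singularity, the trivial bound gives `c^(-α)/(2α)`. Hence `|f_n(s)| ≤ (1/(2α) + 1/4) n^(-α)`
uniformly in `s`, and `V_n` inherits the bound since the outer sawtooth is at most `1/2` and
`t ≤ 1`.
-/

open MeasureTheory Filter Set intervalIntegral Topology

noncomputable def sawtooth (x : ℝ) : ℝ := ⌈x⌉ - x - 1 / 2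

lemma abs_sawtooth_le (x : ℝ) : |sawtooth x| ≤ 1 / 2 := by
  have := Int.le_ceil x
  have := Int.ceil_lt_add_one x
  rw [sawtooth, abs_le]
  constructor <;> linarith

lemma measurable_sawtooth : Measurable sawtooth := by
  unfold sawtooth
  fun_prop

lemma sawtooth_mul_ae_eq {c : ℝ} (hc : c ≠ 0) :
    (fun u => sawtooth (c * u)) =ᵐ[volume] fun u => 1 / 2 - Int.fract (c * u) := by
  have hint : ((c * ·) ⁻¹' range ((↑) : ℤ → ℝ)).Countable :=
    (countable_range _).preimage (mul_right_injective₀ hc)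
  filter_upwards [hint.ae_notMem volume] with u hu
  rw [sawtooth, Int.ceil_sub_self_eq (Int.fract_ne_zero_iff.2 hu)]
  ring

lemma IntervalIntegrable.mul_of_abs_le {f h : ℝ → ℝ} {a b C : ℝ}
    (hf : IntervalIntegrable f volume a b) (hh : Measurable h) (hC : ∀ x, |h x| ≤ C) :
    IntervalIntegrable (fun x => f x * h x) volume a b :=
  ⟨hf.1.mul_bdd hh.aestronglyMeasurable (ae_of_all _ hC),
    hf.2.mul_bdd hh.aestronglyMeasurable (ae_of_all _ hC)⟩

noncomputable def sawtoothPrimitive (x : ℝ) : ℝ := Int.fract x * (1 - Int.fract x) / 2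

lemma abs_sawtoothPrimitive_le (x : ℝ) : |sawtoothPrimitive x| ≤ 1 / 8 := by
  have := Int.fract_nonneg x
  have := Int.fract_lt_one x
  rw [sawtoothPrimitive, abs_le]
  constructor <;> nlinarith [sq_nonneg (Int.fract x - 1 / 2)]

lemma continuous_sawtoothPrimitive : Continuous sawtoothPrimitive :=
  ContinuousOn.comp_fract'' (f := fun y : ℝ => y * (1 - y) / 2) (by fun_prop) (by norm_num)

lemma hasDerivWithinAt_sawtoothPrimitive (x : ℝ) :
    HasDerivWithinAt sawtoothPrimitive (1 / 2 - Int.fract x) (Ici x) x := by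
  set P : ℝ → ℝ := fun y => (y - ⌊x⌋) * (1 - (y - ⌊x⌋)) / 2
  have hP : HasDerivAt P (1 / 2 - Int.fract x) x := by
    have hlin := (hasDerivAt_id' x).sub_const (⌊x⌋ : ℝ)
    refine ((hlin.mul (hlin.const_sub 1)).div_const 2).congr_deriv ?_
    rw [← Int.self_sub_floor]
    ring
  have hEq : sawtoothPrimitive =ᶠ[𝓝[≥] x] P := by
    filter_upwards [Ico_mem_nhdsGE (Int.lt_floor_add_one x)] with y hy
    rw [sawtoothPrimitive, ← Int.self_sub_floor,
      Int.floor_eq_on_Ico ⌊x⌋ y ⟨(Int.floor_le x).trans hy.1, hy.2⟩]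
  exact hP.hasDerivWithinAt.congr_of_eventuallyEq hEq (hEq.eq_of_nhdsWithin self_mem_Ici)

lemma hasDerivWithinAt_sawtoothPrimitive_mul {c : ℝ} (hc : 0 < c) (u : ℝ) :
    HasDerivWithinAt (fun y => sawtoothPrimitive (c * y) / c) (1 / 2 - Int.fract (c * u))
      (Ici u) u := by
  have hlin : HasDerivWithinAt (c * ·) c (Ici u) u := by
    simpa using (hasDerivWithinAt_id u (Ici u)).const_mul c
  have := ((hasDerivWithinAt_sawtoothPrimitive (c * u)).comp u hlin
    fun y hy => mul_le_mul_of_nonneg_left hy hc.le).div_const c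
  exact this.congr_deriv (mul_div_cancel_right₀ _ hc.ne')

theorem abs_integral_mul_le_of_deriv_nonneg {φ φ' G g : ℝ → ℝ} {a b B : ℝ} (hab : a ≤ b)
    (hφ : ∀ x ∈ Icc a b, HasDerivAt φ (φ' x) x) (hφ' : ∀ x ∈ Icc a b, 0 ≤ φ' x)
    (hφ'i : IntervalIntegrable φ' volume a b) (hφa : 0 ≤ φ a) (hG : Continuous G)
    (hGg : ∀ x, HasDerivWithinAt G (g x) (Ioi x) x) (hgi : IntervalIntegrable g volume a b)
    (hGB : ∀ x, |G x| ≤ B) :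
    |∫ x in a..b, φ x * g x| ≤ 2 * B * φ b := by
  rw [← uIcc_of_le hab] at hφ
  have hparts := integral_mul_deriv_eq_deriv_mul_of_hasDeriv_right
    (fun x hx => (hφ x hx).continuousAt.continuousWithinAt) hG.continuousOn
    (fun x hx => (hφ x (Ioo_subset_Icc_self hx)).hasDerivWithinAt) (fun x _ => hGg x) hφ'i hgi
  have hvar : ∫ x in a..b, φ' x = φ b - φ a := integral_eq_sub_of_hasDerivAt hφ hφ'i
  have hmono : φ a ≤ φ b := by
    linarith [hvar ▸ integral_nonneg hab hφ']
  have hrem : |∫ x in a..b, φ' x * G x| ≤ B * (φ b - φ a) := by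
    rw [← hvar, ← intervalIntegral.integral_const_mul, ← Real.norm_eq_abs]
    refine norm_integral_le_of_norm_le hab (ae_of_all _ fun x hx => ?_) (hφ'i.const_mul B)
    rw [Real.norm_eq_abs, abs_mul, abs_of_nonneg (hφ' x (Ioc_subset_Icc_self hx)), mul_comm]
    exact mul_le_mul_of_nonneg_right (hGB x) (hφ' x (Ioc_subset_Icc_self hx))
  rw [hparts]
  calc |φ b * G b - φ a * G a - ∫ x in a..b, φ' x * G x|
      ≤ |φ b * G b| + |φ a * G a| + |∫ x in a..b, φ' x * G x| := by
        linarith [abs_sub (φ b * G b) (φ a * G a),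
          abs_sub (φ b * G b - φ a * G a) (∫ x in a..b, φ' x * G x)]
    _ ≤ φ b * B + φ a * B + B * (φ b - φ a) := by
        rw [abs_mul, abs_mul, abs_of_nonneg (hφa.trans hmono), abs_of_nonneg hφa]
        exact add_le_add (add_le_add (mul_le_mul_of_nonneg_left (hGB b) (hφa.trans hmono))
          (mul_le_mul_of_nonneg_left (hGB a) hφa)) hrem
    _ = 2 * B * φ b := by ring

theorem abs_integral_sub_rpow_mul_le {α C a b : ℝ} {h : ℝ → ℝ} (hα : 0 < α) (hab : a ≤ b)
    (hC : ∀ x, |h x| ≤ C) :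
    |∫ u in a..b, (b - u) ^ (α - 1) * h u| ≤ C * (b - a) ^ α / α := by
  have hint : IntervalIntegrable (fun u => (b - u) ^ (α - 1)) volume a b := by
    have := intervalIntegrable_rpow' (a := b - a) (b := b - b) (r := α - 1) (by linarith)
    simpa only [sub_sub_cancel, sub_self, sub_zero] using this.comp_sub_left b
  calc |∫ u in a..b, (b - u) ^ (α - 1) * h u| ≤ ∫ u in a..b, C * (b - u) ^ (α - 1) := by
        rw [← Real.norm_eq_abs]
        refine norm_integral_le_of_norm_le hab (ae_of_all _ fun u hu => ?_) (hint.const_mul C)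
        have hpos : 0 ≤ (b - u) ^ (α - 1) := Real.rpow_nonneg (by linarith [hu.2]) _
        rw [Real.norm_eq_abs, abs_mul, abs_of_nonneg hpos, mul_comm]
        exact mul_le_mul_of_nonneg_right (hC u) hpos
    _ = C * (b - a) ^ α / α := by
        rw [intervalIntegral.integral_const_mul, integral_comp_sub_left (fun x => x ^ (α - 1)),
          integral_rpow (Or.inl (by linarith))]
        simp only [sub_add_cancel, sub_self, Real.zero_rpow hα.ne', sub_zero]
        ring

lemma intervalIntegrable_sub_rpow_mul_sawtooth {α : ℝ} (hα : 0 < α) (s c a b : ℝ) :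
    IntervalIntegrable (fun u => (s - u) ^ (α - 1) * sawtooth (c * u)) volume a b := by
  have hφ : IntervalIntegrable (fun u => (s - u) ^ (α - 1)) volume a b := by
    have := intervalIntegrable_rpow' (a := s - a) (b := s - b) (r := α - 1) (by linarith)
    simpa only [sub_sub_cancel] using this.comp_sub_left s
  exact hφ.mul_of_abs_le (measurable_sawtooth.comp (measurable_const_mul c))
    fun u => abs_sawtooth_le (c * u)

theorem abs_integral_sub_rpow_mul_sawtooth_le_of_inv_le {α c s : ℝ} (hα1 : α ≤ 1)
    (hc : 0 < c) (hs : c⁻¹ ≤ s) :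
    |∫ u in (0 : ℝ)..s - c⁻¹, (s - u) ^ (α - 1) * sawtooth (c * u)| ≤ c ^ (-α) / 4 := by
  set m := s - c⁻¹
  have hm : 0 ≤ m := sub_nonneg.2 hs
  have hpos : ∀ u ∈ Icc 0 m, 0 < s - u := fun u hu => by
    have := inv_pos.2 hc
    linarith [hu.2]
  have hφ : ∀ u ∈ Icc 0 m,
      HasDerivAt (fun u => (s - u) ^ (α - 1)) ((1 - α) * (s - u) ^ (α - 2)) u := fun u hu => by
    refine (((hasDerivAt_id' u).const_sub s).rpow_const (Or.inl (hpos u hu).ne')).congr_deriv ?_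
    rw [show α - 1 - 1 = α - 2 by ring]
    ring
  have hφ'i : IntervalIntegrable (fun u => (1 - α) * (s - u) ^ (α - 2)) volume 0 m := by
    refine ContinuousOn.intervalIntegrable fun u hu => ?_
    rw [uIcc_of_le hm] at hu
    exact (continuousAt_const.mul ((continuousAt_const.sub continuousAt_id).rpow_const
      (Or.inl (hpos u hu).ne'))).continuousWithinAt
  have hsaw : ∫ u in (0 : ℝ)..m, (s - u) ^ (α - 1) * sawtooth (c * u) =
      ∫ u in (0 : ℝ)..m, (s - u) ^ (α - 1) * (1 / 2 - Int.fract (c * u)) :=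
    integral_congr_ae <| (sawtooth_mul_ae_eq hc.ne').mono fun u hu _ =>
      congrArg ((s - u) ^ (α - 1) * ·) hu
  have hgi : IntervalIntegrable (fun u => 1 / 2 - Int.fract (c * u)) volume 0 m :=
    (intervalIntegrable_const.mono_fun'
      (measurable_sawtooth.comp (measurable_const_mul c)).aestronglyMeasurable
      (ae_of_all _ fun u => abs_sawtooth_le (c * u))).congr_ae
      (ae_restrict_of_ae (sawtooth_mul_ae_eq hc.ne'))
  have key := abs_integral_mul_le_of_deriv_nonneg (G := fun y => sawtoothPrimitive (c * y) / c)
    (B := 1 / (8 * c)) hm hφ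
    (fun u hu => mul_nonneg (by linarith) (Real.rpow_nonneg (hpos u hu).le _)) hφ'i
    (Real.rpow_nonneg (hpos 0 ⟨le_rfl, hm⟩).le _)
    ((continuous_sawtoothPrimitive.comp (continuous_const_mul c)).div_const c)
    (fun u => (hasDerivWithinAt_sawtoothPrimitive_mul hc u).mono Ioi_subset_Ici_self) hgi
    fun u => by
      rw [abs_div, abs_of_pos hc, div_le_div_iff₀ hc (by positivity)]
      nlinarith [abs_sawtoothPrimitive_le (c * u)]
  rw [hsaw]
  refine key.trans_eq ?_
  simp only [m, sub_sub_cancel]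
  rw [Real.rpow_sub_one (inv_ne_zero hc.ne'), Real.rpow_neg hc.le, Real.inv_rpow hc.le]
  field_simp
  ring

theorem abs_integral_sub_rpow_mul_sawtooth_le {α c s : ℝ} (hα0 : 0 < α) (hα1 : α ≤ 1)
    (hc : 0 < c) (hs : 0 ≤ s) :
    |∫ u in (0 : ℝ)..s, (s - u) ^ (α - 1) * sawtooth (c * u)| ≤
      (1 / (2 * α) + 1 / 4) * c ^ (-α) := by
  have htail : ∀ m ∈ Icc 0 s, s - m ≤ c⁻¹ →
      |∫ u in m..s, (s - u) ^ (α - 1) * sawtooth (c * u)| ≤ c ^ (-α) / (2 * α) := by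
    intro m hm hsm
    refine (abs_integral_sub_rpow_mul_le hα0 hm.2 fun u => abs_sawtooth_le (c * u)).trans ?_
    have := Real.rpow_le_rpow (sub_nonneg.2 hm.2) hsm hα0.le
    rw [Real.rpow_neg hc.le, ← Real.inv_rpow hc.le]
    rw [div_le_div_iff₀ hα0 (by positivity)]
    nlinarith
  rcases le_or_gt s c⁻¹ with hsc | hsc
  · have := htail 0 ⟨le_rfl, hs⟩ (by rwa [sub_zero])
    linarith [show c ^ (-α) / (2 * α) = 1 / (2 * α) * c ^ (-α) by ring,
      Real.rpow_pos_of_pos hc (-α)]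
  · rw [← integral_add_adjacent_intervals (b := s - c⁻¹)
      (intervalIntegrable_sub_rpow_mul_sawtooth hα0 ..)
      (intervalIntegrable_sub_rpow_mul_sawtooth hα0 ..)]
    calc _ ≤ c ^ (-α) / 4 + c ^ (-α) / (2 * α) :=
          (abs_add_le _ _).trans <| add_le_add
            (abs_integral_sub_rpow_mul_sawtooth_le_of_inv_le hα1 hc hsc.le)
            (htail _ ⟨by linarith, by linarith [inv_pos.2 hc]⟩ (by rw [sub_sub_cancel]))
      _ = (1 / (2 * α) + 1 / 4) * c ^ (-α) := by ring

theorem abs_two_mul_integral_mul_sawtooth_le {α c t : ℝ} (hα0 : 0 < α) (hα1 : α ≤ 1)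
    (hc : 0 < c) (ht : t ∈ Icc 0 1) :
    |2 * ∫ s in (0 : ℝ)..t,
        (∫ u in (0 : ℝ)..s, (s - u) ^ (α - 1) * sawtooth (c * u)) * sawtooth (c * s)| ≤
      (1 / (2 * α) + 1 / 4) * c ^ (-α) := by
  have hK : 0 ≤ (1 / (2 * α) + 1 / 4) * c ^ (-α) := by positivity
  have hint := norm_integral_le_of_norm_le_const (a := 0) (b := t)
    (f := fun s => (∫ u in (0 : ℝ)..s, (s - u) ^ (α - 1) * sawtooth (c * u)) * sawtooth (c * s))
    fun s hs => by
      rw [uIoc_of_le ht.1] at hs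
      rw [Real.norm_eq_abs, abs_mul]
      exact mul_le_mul (abs_integral_sub_rpow_mul_sawtooth_le hα0 hα1 hc hs.1.le)
        (abs_sawtooth_le _) (abs_nonneg _) hK
  rw [Real.norm_eq_abs, sub_zero, abs_of_nonneg ht.1] at hint
  rw [abs_mul, abs_two]
  nlinarith [ht.2]

/-- With `f_n(s) = ∫₀ˢ (s-u)^{α-1}(⌈nu⌉ - nu - 1/2) du` and
`V_n(t) = 2 ∫₀ᵗ f_n(s)(⌈ns⌉ - ns - 1/2) ds`, there is a constant `M_α`
with `|V_n(t)| ≤ M_α n^{-α}` for all `n ≥ 1`, `t ∈ [0,1]`; hence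
`V_n(t) → 0` as `n → ∞`. -/
theorem Vn_bound_and_tendsto_zero (α : ℝ) (hα : α ∈ Set.Ioo (0 : ℝ) 1) :
    ∃ M : ℝ, (∀ n : ℕ, 1 ≤ n → ∀ t ∈ Set.Icc (0 : ℝ) 1,
        |2 * ∫ s in (0 : ℝ)..t,
            (∫ u in (0 : ℝ)..s, (s - u) ^ (α - 1) * ((⌈(n : ℝ) * u⌉ : ℝ) - n * u - 1 / 2))
              * ((⌈(n : ℝ) * s⌉ : ℝ) - n * s - 1 / 2)|
          ≤ M * (n : ℝ) ^ (-α)) ∧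
      ∀ t ∈ Set.Icc (0 : ℝ) 1,
        Tendsto (fun n : ℕ =>
          2 * ∫ s in (0 : ℝ)..t,
            (∫ u in (0 : ℝ)..s, (s - u) ^ (α - 1) * ((⌈(n : ℝ) * u⌉ : ℝ) - n * u - 1 / 2))
              * ((⌈(n : ℝ) * s⌉ : ℝ) - n * s - 1 / 2)) atTop (nhds 0) := by
  obtain ⟨hα0, hα1⟩ := hα
  have hbound : ∀ n : ℕ, 1 ≤ n → ∀ t ∈ Icc (0 : ℝ) 1,
      |2 * ∫ s in (0 : ℝ)..t,
          (∫ u in (0 : ℝ)..s, (s - u) ^ (α - 1) * sawtooth (n * u)) * sawtooth (n * s)| ≤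
        (1 / (2 * α) + 1 / 4) * (n : ℝ) ^ (-α) := fun n hn t ht =>
    abs_two_mul_integral_mul_sawtooth_le hα0 hα1.le (by exact_mod_cast hn) ht
  refine ⟨_, hbound, fun t ht =>
    squeeze_zero_norm' (a := fun n : ℕ => (1 / (2 * α) + 1 / 4) * (n : ℝ) ^ (-α)) ?_ ?_⟩
  · filter_upwards [eventually_ge_atTop 1] with n hn
    exact hbound n hn t ht
  · simpa using ((tendsto_rpow_neg_atTop hα0).comp tendsto_natCast_atTop_atTop).const_mul
      (1 / (2 * α) + 1 / 4)
end

section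
/- Let 0 < α < 1 and 0 ≤ s, t ≤ 1. Then n^α ∫₀ᵗ ∫₀ˢ |u - r|^{α-1} (⌈nr⌉ - nr - 1/2) dr du → 0 as n → ∞. More precisely, this quantity is O(n^{α-1}). -/
/-!
Write `ψₙ(r) = ⌈nr⌉ - nr - 1/2` and `A(x) = ∫₀ˣ |y|^(α-1) dy = sign(x) |x|^α / α`. By Fubini the
double integral equals `∫₀ˢ ψₙ(r) (A(t - r) + A(r)) dr`, where `A(t - ·)` and `A` are monotone and
bounded by `1/α` on `[0, 1]`. As `ψₙ` has mean zero on every period `[k/n, (k+1)/n]`, against a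
monotone `h` it only sees the oscillation of `h` over each period; these oscillations telescope, so
`∫₀ˢ ψₙ h = O(sup |h| / n)`. Hence the double integral is `O(1/n)`, and `n^α` times it is
`O(n^(α-1))`.
-/

open MeasureTheory Filter Set intervalIntegral

section AbsRpow

variable {α : ℝ}

lemma locallyIntegrable_abs_rpow_sub_one (hα : 0 < α) :
    LocallyIntegrable (fun x : ℝ => |x| ^ (α - 1)) := by
  refine locallyIntegrable_of_norm_le_rpow (μ := volume) (by simp) (C := 1) (α := 1 - α)
    (by simpa using hα) (Eventually.of_forall fun x => ?_)
    (measurable_abs.pow_const _).aestronglyMeasurable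
  simp only [Real.norm_eq_abs, neg_sub, one_mul]
  rw [abs_of_nonneg (by positivity)]

lemma intervalIntegrable_abs_rpow_sub_one (hα : 0 < α) (a b : ℝ) :
    IntervalIntegrable (fun x : ℝ => |x| ^ (α - 1)) volume a b :=
  ((locallyIntegrable_abs_rpow_sub_one hα).integrableOn_isCompact
    isCompact_uIcc).intervalIntegrable

noncomputable def absRpowPrimitive (α x : ℝ) : ℝ := ∫ y in (0 : ℝ)..x, |y| ^ (α - 1)

lemma integral_abs_rpow_sub_one (hα : 0 < α) (a b : ℝ) :
    ∫ x in a..b, |x| ^ (α - 1) = absRpowPrimitive α b - absRpowPrimitive α a :=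
  (integral_interval_sub_left (intervalIntegrable_abs_rpow_sub_one hα 0 b)
    (intervalIntegrable_abs_rpow_sub_one hα 0 a)).symm

lemma absRpowPrimitive_monotone (hα : 0 < α) : Monotone (absRpowPrimitive α) := fun x y hxy => by
  have := integral_nonneg (μ := volume) hxy fun u _ => Real.rpow_nonneg (abs_nonneg u) (α - 1)
  rw [integral_abs_rpow_sub_one hα] at this
  linarith

lemma absRpowPrimitive_neg (x : ℝ) : absRpowPrimitive α (-x) = -absRpowPrimitive α x := by
  have h := integral_comp_neg (a := 0) (b := x) fun y : ℝ => |y| ^ (α - 1)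
  simp only [abs_neg, neg_zero] at h
  rw [absRpowPrimitive, absRpowPrimitive, h, integral_symm]

lemma absRpowPrimitive_of_nonneg (hα : 0 < α) {x : ℝ} (hx : 0 ≤ x) :
    absRpowPrimitive α x = x ^ α / α := by
  have : absRpowPrimitive α x = ∫ y in (0 : ℝ)..x, y ^ (α - 1) :=
    integral_congr fun y hy => by rw [uIcc_of_le hx] at hy; rw [abs_of_nonneg hy.1]
  rw [this, integral_rpow (Or.inl (by linarith)), sub_add_cancel, Real.zero_rpow hα.ne', sub_zero]

lemma abs_absRpowPrimitive (hα : 0 < α) (x : ℝ) : |absRpowPrimitive α x| = |x| ^ α / α := by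
  rcases le_total 0 x with hx | hx
  · rw [absRpowPrimitive_of_nonneg hα hx, abs_of_nonneg hx, abs_of_nonneg (by positivity)]
  · rw [← neg_neg x, absRpowPrimitive_neg, abs_neg, abs_neg,
      absRpowPrimitive_of_nonneg hα (neg_nonneg.2 hx), abs_of_nonneg (neg_nonneg.2 hx),
      abs_of_nonneg (div_nonneg (Real.rpow_nonneg (neg_nonneg.2 hx) _) hα.le)]

lemma abs_absRpowPrimitive_le (hα : 0 < α) {x : ℝ} (hx : |x| ≤ 1) :
    |absRpowPrimitive α x| ≤ 1 / α := by
  rw [abs_absRpowPrimitive hα]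
  gcongr
  exact Real.rpow_le_one (abs_nonneg x) hx hα.le

end AbsRpow

section CeilSawtooth

noncomputable def ceilSawtooth (c r : ℝ) : ℝ := ⌈c * r⌉ - c * r - 1 / 2

lemma abs_ceilSawtooth_le (c r : ℝ) : |ceilSawtooth c r| ≤ 1 / 2 := by
  have h₁ := Int.le_ceil (c * r)
  have h₂ := Int.ceil_lt_add_one (c * r)
  rw [abs_le, ceilSawtooth]
  constructor <;> linarith

lemma measurable_ceilSawtooth (c : ℝ) : Measurable (ceilSawtooth c) := by
  unfold ceilSawtooth
  fun_prop

lemma IntervalIntegrable.ceilSawtooth_mul {g : ℝ → ℝ} {a b : ℝ}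
    (hg : IntervalIntegrable g volume a b) (c : ℝ) :
    IntervalIntegrable (fun r => ceilSawtooth c r * g r) volume a b := by
  rw [intervalIntegrable_iff] at hg ⊢
  exact hg.bdd_mul (measurable_ceilSawtooth c).aestronglyMeasurable
    (Eventually.of_forall fun r => (Real.norm_eq_abs _).trans_le (abs_ceilSawtooth_le c r))

lemma intervalIntegrable_ceilSawtooth (c a b : ℝ) :
    IntervalIntegrable (ceilSawtooth c) volume a b := by
  simpa using (intervalIntegrable_const (c := (1 : ℝ))).ceilSawtooth_mul c (a := a) (b := b)

variable {c : ℝ}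

lemma ceilSawtooth_eq_of_mem_Ioc (hc : 0 < c) (k : ℕ) {r : ℝ}
    (hr : r ∈ Ioc (k / c) ((k + 1) / c)) : ceilSawtooth c r = k + 1 / 2 - c * r := by
  have hceil : ⌈c * r⌉ = k + 1 := by
    obtain ⟨hlo, hhi⟩ := hr
    rw [div_lt_iff₀ hc] at hlo
    rw [le_div_iff₀ hc] at hhi
    rw [Int.ceil_eq_iff]
    push_cast
    constructor <;> linarith
  rw [ceilSawtooth, hceil]
  push_cast
  ring

lemma integral_ceilSawtooth_period (hc : 0 < c) (k : ℕ) :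
    ∫ r in k / c..(k + 1) / c, ceilSawtooth c r = 0 := by
  have hle : (k : ℝ) / c ≤ (k + 1) / c := by gcongr; linarith
  rw [integral_congr_ae (g := fun r => k + 1 / 2 - c * r) (Eventually.of_forall fun r hr =>
    ceilSawtooth_eq_of_mem_Ioc hc k (by rwa [uIoc_of_le hle] at hr))]
  rw [integral_sub intervalIntegrable_const (intervalIntegrable_id.const_mul c),
    intervalIntegral.integral_const, intervalIntegral.integral_const_mul, integral_id, smul_eq_mul]
  field_simp
  ring

variable {h : ℝ → ℝ}

lemma abs_integral_ceilSawtooth_mul_period_le (hc : 0 < c) (hh : Monotone h) (k : ℕ) :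
    |∫ r in k / c..(k + 1) / c, ceilSawtooth c r * h r|
      ≤ (h ((k + 1) / c) - h (k / c)) / (2 * c) := by
  set a : ℝ := k / c
  set b : ℝ := (k + 1) / c
  have hab : a ≤ b := div_le_div_of_nonneg_right (by linarith) hc.le
  have hlen : b - a = 1 / c := by simp only [a, b]; field_simp; ring
  have hcentre : ∫ r in a..b, ceilSawtooth c r * h r
      = ∫ r in a..b, ceilSawtooth c r * (h r - h a) := by
    simp only [mul_sub]
    rw [intervalIntegral.integral_sub (hh.intervalIntegrable.ceilSawtooth_mul c)
      ((intervalIntegrable_ceilSawtooth c a b).mul_const _), intervalIntegral.integral_mul_const,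
      integral_ceilSawtooth_period hc k, zero_mul, sub_zero]
  have hbound :
      ∀ r ∈ uIoc a b, ‖ceilSawtooth c r * (h r - h a)‖ ≤ 1 / 2 * (h b - h a) := by
    intro r hr
    rw [uIoc_of_le hab] at hr
    rw [Real.norm_eq_abs, abs_mul, abs_of_nonneg (sub_nonneg.2 (hh hr.1.le))]
    exact mul_le_mul (abs_ceilSawtooth_le c r) (by linarith [hh hr.2]) (sub_nonneg.2 (hh hr.1.le))
      (by norm_num)
  calc |∫ r in a..b, ceilSawtooth c r * h r|
      ≤ 1 / 2 * (h b - h a) * |b - a| := by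
        rw [hcentre]; exact intervalIntegral.norm_integral_le_of_norm_le_const hbound
    _ = (h b - h a) / (2 * c) := by
        rw [hlen, abs_of_pos (by positivity)]; field_simp

lemma abs_integral_ceilSawtooth_mul_periods_le (hc : 0 < c) (hh : Monotone h) (m : ℕ) :
    |∫ r in (0 : ℝ)..m / c, ceilSawtooth c r * h r| ≤ (h (m / c) - h 0) / (2 * c) := by
  have hsum := sum_integral_adjacent_intervals (a := fun k : ℕ => k / c) (n := m)
    (f := fun r => ceilSawtooth c r * h r) fun k _ => hh.intervalIntegrable.ceilSawtooth_mul c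
  have htelescope := Finset.sum_range_sub (fun k : ℕ => h (k / c)) m
  simp only [Nat.cast_succ, Nat.cast_zero, zero_div] at hsum htelescope
  calc |∫ r in (0 : ℝ)..m / c, ceilSawtooth c r * h r|
      ≤ ∑ k ∈ Finset.range m, |∫ r in k / c..(k + 1) / c, ceilSawtooth c r * h r| := by
        rw [← hsum]; exact Finset.abs_sum_le_sum_abs _ _
    _ ≤ ∑ k ∈ Finset.range m, (h ((k + 1) / c) - h (k / c)) / (2 * c) :=
        Finset.sum_le_sum fun k _ => abs_integral_ceilSawtooth_mul_period_le hc hh k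
    _ = (h (m / c) - h 0) / (2 * c) := by rw [← Finset.sum_div, htelescope]

theorem abs_integral_ceilSawtooth_mul_le_of_monotone (hc : 0 < c) (hh : Monotone h) {s M : ℝ}
    (hs : 0 ≤ s) (hM : ∀ x ∈ Icc 0 s, |h x| ≤ M) :
    |∫ r in (0 : ℝ)..s, ceilSawtooth c r * h r| ≤ 3 * M / (2 * c) := by
  set m := ⌊c * s⌋₊
  have hm₀ : 0 ≤ (m : ℝ) / c := by positivity
  have hms : (m : ℝ) / c ≤ s := by
    rw [div_le_iff₀ hc, mul_comm]; exact Nat.floor_le (by positivity)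
  have htail_len : s - m / c ≤ 1 / c := by
    rw [sub_le_iff_le_add, ← add_div, le_div_iff₀ hc]
    linarith [Nat.lt_floor_add_one (c * s)]
  have hends : h (m / c) - h 0 ≤ 2 * M := by
    have h₁ := abs_le.1 (hM _ ⟨hm₀, hms⟩)
    have h₂ := abs_le.1 (hM 0 ⟨le_rfl, hs⟩)
    linarith [h₁.2, h₂.1]
  have htail : |∫ r in m / c..s, ceilSawtooth c r * h r| ≤ 1 / 2 * M * |s - m / c| := by
    refine intervalIntegral.norm_integral_le_of_norm_le_const (f := fun r => ceilSawtooth c r * h r)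
      fun r hr => ?_
    rw [uIoc_of_le hms] at hr
    rw [Real.norm_eq_abs, abs_mul]
    exact mul_le_mul (abs_ceilSawtooth_le c r) (hM r ⟨by linarith [hr.1], hr.2⟩) (abs_nonneg _)
      (by norm_num)
  rw [abs_of_nonneg (sub_nonneg.2 hms)] at htail
  have hM₀ : 0 ≤ M := (abs_nonneg _).trans (hM 0 ⟨le_rfl, hs⟩)
  rw [← integral_add_adjacent_intervals (hh.intervalIntegrable.ceilSawtooth_mul c)
    (hh.intervalIntegrable.ceilSawtooth_mul c)]
  calc _ ≤ |∫ r in (0 : ℝ)..m / c, ceilSawtooth c r * h r|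
        + |∫ r in m / c..s, ceilSawtooth c r * h r| := abs_add_le _ _
    _ ≤ 2 * M / (2 * c) + 1 / 2 * M * (1 / c) := by
        gcongr
        · exact (abs_integral_ceilSawtooth_mul_periods_le hc hh m).trans (by gcongr)
        · exact htail.trans (by gcongr)
    _ = 3 * M / (2 * c) := by ring

theorem abs_integral_ceilSawtooth_mul_le_of_antitone (hc : 0 < c) (hh : Antitone h) {s M : ℝ}
    (hs : 0 ≤ s) (hM : ∀ x ∈ Icc 0 s, |h x| ≤ M) :
    |∫ r in (0 : ℝ)..s, ceilSawtooth c r * h r| ≤ 3 * M / (2 * c) := by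
  simpa [intervalIntegral.integral_neg] using
    abs_integral_ceilSawtooth_mul_le_of_monotone hc hh.neg hs fun x hx =>
      (abs_neg (h x)).trans_le (hM x hx)

end CeilSawtooth

section Fubini

variable {K g : ℝ → ℝ} {s : ℝ}

lemma integrableOn_uIoc_prod_uIoc_sub_mul (hK : LocallyIntegrable K)
    (hg : IntervalIntegrable g volume 0 s) (t : ℝ) :
    IntegrableOn (fun p : ℝ × ℝ => K (p.1 - p.2) * g p.2) (uIoc 0 t ×ˢ uIoc 0 s) := by
  set R := |t| + |s|
  have hg' : Integrable ((uIoc 0 s).indicator g) :=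
    (integrable_indicator_iff measurableSet_uIoc).2 (intervalIntegrable_iff.1 hg)
  have hK' : Integrable ((Icc (-R) R).indicator K) :=
    (integrable_indicator_iff measurableSet_Icc).2 (hK.integrableOn_isCompact isCompact_Icc)
  -- a truncated convolution integrand; on the box `|u - r| ≤ |t| + |s|`, so neither indicator cuts
  have hconv := hg'.convolution_integrand (ContinuousLinearMap.mul ℝ ℝ) hK' (μ := volume)
  refine (hconv.integrableOn (s := uIoc 0 t ×ˢ uIoc 0 s)).congr_fun (fun p ⟨hu, hr⟩ => ?_)
    (measurableSet_uIoc.prod measurableSet_uIoc)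
  have hu' := abs_sub_left_of_mem_uIcc (uIoc_subset_uIcc hu)
  have hr' := abs_sub_left_of_mem_uIcc (uIoc_subset_uIcc hr)
  simp only [sub_zero] at hu' hr'
  have hdiff : p.1 - p.2 ∈ Icc (-R) R := abs_le.1 ((abs_sub _ _).trans (add_le_add hu' hr'))
  simp [indicator_of_mem hr, indicator_of_mem hdiff, mul_comm]

lemma integral_integral_sub_mul (hK : LocallyIntegrable K) (hg : IntervalIntegrable g volume 0 s)
    (t : ℝ) :
    ∫ u in (0 : ℝ)..t, ∫ r in (0 : ℝ)..s, K (u - r) * g r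
      = ∫ r in (0 : ℝ)..s, g r * ∫ u in (0 : ℝ)..t, K (u - r) := by
  rw [intervalIntegral_intervalIntegral_swap (F := fun u r => K (u - r) * g r)
    (integrableOn_uIoc_prod_uIoc_sub_mul hK hg t)]
  refine intervalIntegral.integral_congr fun r _ => ?_
  rw [intervalIntegral.integral_mul_const, mul_comm]

end Fubini

lemma integral_abs_sub_rpow_sub_one {α : ℝ} (hα : 0 < α) (t r : ℝ) :
    ∫ u in (0 : ℝ)..t, |u - r| ^ (α - 1)
      = absRpowPrimitive α (t - r) + absRpowPrimitive α r := by
  rw [intervalIntegral.integral_comp_sub_right (fun x => |x| ^ (α - 1)),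
    integral_abs_rpow_sub_one hα, zero_sub, absRpowPrimitive_neg, sub_neg_eq_add]

lemma abs_integral_integral_abs_sub_rpow_mul_ceilSawtooth_le {α c s t : ℝ} (hα : 0 < α)
    (hc : 0 < c) (hs : s ∈ Icc (0 : ℝ) 1) (ht : t ∈ Icc (0 : ℝ) 1) :
    |∫ u in (0 : ℝ)..t, ∫ r in (0 : ℝ)..s, |u - r| ^ (α - 1) * ceilSawtooth c r|
      ≤ 3 / (α * c) := by
  have hA := absRpowPrimitive_monotone hα
  have hA' : Antitone fun r => absRpowPrimitive α (t - r) := fun x y hxy => hA (by linarith)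
  have hbound : ∀ x ∈ Icc 0 s, |absRpowPrimitive α x| ≤ 1 / α := fun x hx =>
    abs_absRpowPrimitive_le hα (abs_le.2 ⟨by linarith [hx.1], by linarith [hx.2, hs.2]⟩)
  have hbound' : ∀ x ∈ Icc 0 s, |absRpowPrimitive α (t - x)| ≤ 1 / α := fun x hx =>
    abs_absRpowPrimitive_le hα
      (abs_le.2 ⟨by linarith [hx.2, hs.2, ht.1], by linarith [hx.1, ht.2]⟩)
  rw [integral_integral_sub_mul (locallyIntegrable_abs_rpow_sub_one hα)
    (intervalIntegrable_ceilSawtooth c 0 s) t]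
  simp only [integral_abs_sub_rpow_sub_one hα, mul_add]
  rw [intervalIntegral.integral_add (hA'.intervalIntegrable.ceilSawtooth_mul c)
    (hA.intervalIntegrable.ceilSawtooth_mul c)]
  calc _ ≤ 3 * (1 / α) / (2 * c) + 3 * (1 / α) / (2 * c) :=
        (abs_add_le _ _).trans <| add_le_add
          (abs_integral_ceilSawtooth_mul_le_of_antitone hc hA' hs.1 hbound')
          (abs_integral_ceilSawtooth_mul_le_of_monotone hc hA hs.1 hbound)
    _ = 3 / (α * c) := by field_simp; ring

lemma tendsto_zero_of_abs_le_mul_rpow {f : ℕ → ℝ} {β C : ℝ} (hβ : β < 0)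
    (hf : ∀ n : ℕ, 1 ≤ n → |f n| ≤ C * (n : ℝ) ^ β) : Tendsto f atTop (nhds 0) := by
  refine squeeze_zero_norm' (a := fun n : ℕ => C * (n : ℝ) ^ β) ?_ ?_
  · filter_upwards [eventually_ge_atTop 1] with n hn using hf n hn
  · simpa using ((tendsto_rpow_neg_atTop (neg_pos.2 hβ)).comp
      tendsto_natCast_atTop_atTop).const_mul C

/-- For `0 < α < 1` and `s, t ∈ [0,1]`,
`n^α ∫₀ᵗ ∫₀ˢ |u-r|^{α-1}(⌈nr⌉ - nr - 1/2) dr du = O(n^{α-1}) → 0`. -/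
theorem double_integral_O_n_alpha_sub_one (α : ℝ) (hα : α ∈ Set.Ioo (0 : ℝ) 1)
    (s t : ℝ) (hs : s ∈ Set.Icc (0 : ℝ) 1) (ht : t ∈ Set.Icc (0 : ℝ) 1) :
    (∃ C : ℝ, ∀ n : ℕ, 1 ≤ n →
      |(n : ℝ) ^ α *
          ∫ u in (0 : ℝ)..t,
            ∫ r in (0 : ℝ)..s, |u - r| ^ (α - 1) * ((⌈(n : ℝ) * r⌉ : ℝ) - n * r - 1 / 2)|
        ≤ C * (n : ℝ) ^ (α - 1)) ∧
    Tendsto (fun n : ℕ =>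
        (n : ℝ) ^ α *
          ∫ u in (0 : ℝ)..t,
            ∫ r in (0 : ℝ)..s, |u - r| ^ (α - 1) * ((⌈(n : ℝ) * r⌉ : ℝ) - n * r - 1 / 2))
      atTop (nhds 0) := by
  obtain ⟨hα₀, hα₁⟩ := hα
  suffices hbound : ∀ n : ℕ, 1 ≤ n →
      |(n : ℝ) ^ α *
          ∫ u in (0 : ℝ)..t,
            ∫ r in (0 : ℝ)..s, |u - r| ^ (α - 1) * ((⌈(n : ℝ) * r⌉ : ℝ) - n * r - 1 / 2)|
        ≤ 3 / α * (n : ℝ) ^ (α - 1) from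
    ⟨⟨3 / α, hbound⟩, tendsto_zero_of_abs_le_mul_rpow (by linarith) hbound⟩
  intro n hn
  have hn₀ : (0 : ℝ) < n := Nat.cast_pos.2 hn
  rw [abs_mul, abs_of_nonneg (by positivity)]
  calc _ ≤ (n : ℝ) ^ α * (3 / (α * n)) := by
        gcongr
        exact abs_integral_integral_abs_sub_rpow_mul_ceilSawtooth_le hα₀ hn₀ hs ht
    _ = 3 / α * (n : ℝ) ^ (α - 1) := by
        rw [Real.rpow_sub_one hn₀.ne']; field_simp
end
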